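/- arXiv:2312.13983 — 6 statements merged into one kernel-verified Lean document; each statement's English description precedes it below -/
import Mathlib

section
/- Let C ⊆ V and D ⊆ W be convex cones in finite-dimensional real vector spaces, let a₁ be an interior point of C and a₂ an interior point of D. Then a₁ ⊗ a₂ is an interior point of the minimal tensor product C ⊗min D inside V ⊗ W. -/
open scoped TensorProduct

noncomputable section

/-- A convex cone: a set closed under addition and multiplication by nonnegative reals. -/
def IsConvexCone {V : Type*} [AddCommGroup V] [Module ℝ V] (C : Set V) : Prop :=
  (∀ x ∈ C, ∀ y ∈ C, x + y ∈ C) ∧ ∀ r : ℝ, 0 ≤ r → ∀ x ∈ C, r • x ∈ C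

/-- The minimal tensor product `C ⊗min D = { Σᵢ cᵢ ⊗ dᵢ | cᵢ ∈ C, dᵢ ∈ D }`. -/
def minTensor {V W : Type*} [AddCommGroup V] [Module ℝ V] [AddCommGroup W] [Module ℝ W]
    (C : Set V) (D : Set W) : Set (TensorProduct ℝ V W) :=
  (AddSubmonoid.closure {x | ∃ c ∈ C, ∃ d ∈ D, x = c ⊗ₜ[ℝ] d} : AddSubmonoid _)

/-!
Call `p` an order unit of a cone `S` if every vector `z` satisfies `z ≤ r p` for some `r > 0`
in the order defined by `S`. Interior points of `C` and `D` are order units, and the identity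
`r s (a₁ ⊗ a₂) - v ⊗ w = ½ ((r a₁ + v) ⊗ (s a₂ - w) + (r a₁ - v) ⊗ (s a₂ + w))`
shows that `a₁ ⊗ a₂` is then an order unit of `C ⊗min D`. In finite dimension an order unit
is an interior point: the cone spans the space, so it has some interior point `y`, and
`r p = (r p - y) + y` lies in the interior as well.
-/

open Set Filter Topology

def IsOrderUnit {E : Type*} [AddCommGroup E] [Module ℝ E] (S : Set E) (p : E) : Prop :=
  ∀ z, ∃ r : ℝ, 0 < r ∧ r • p - z ∈ S

theorem Convex.interior_nonempty_of_affineSpan_eq_top {E : Type*} [AddCommGroup E]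
    [Module ℝ E] [TopologicalSpace E] [IsTopologicalAddGroup E] [ContinuousSMul ℝ E]
    [T2Space E] [FiniteDimensional ℝ E] {s : Set E} (hs : Convex ℝ s)
    (h : affineSpan ℝ s = ⊤) : (interior s).Nonempty := by
  let e : E ≃L[ℝ] (Fin (Module.finrank ℝ E) → ℝ) :=
    (Module.finBasis ℝ E).equivFun.toContinuousLinearEquiv
  have himage : (interior (e '' s)).Nonempty :=
    (hs.linear_image e.toLinearMap).interior_nonempty_iff_affineSpan_eq_top.mpr
      (AffineMap.span_eq_top_of_surjective e.toLinearMap.toAffineMap e.surjective h)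
  exact (e.toHomeomorph.image_interior s ▸ himage).of_image

namespace IsConvexCone

variable {E : Type*} [AddCommGroup E] [Module ℝ E] {S : Set E}

theorem convex (hS : IsConvexCone S) : Convex ℝ S :=
  fun x hx y hy a b ha hb _ => hS.1 _ (hS.2 a ha x hx) _ (hS.2 b hb y hy)

theorem mem_of_isOrderUnit (hS : IsConvexCone S) {p : E} (hp : IsOrderUnit S p) : p ∈ S := by
  obtain ⟨r, hr, hrp⟩ := hp 0
  simpa [smul_smul, inv_mul_cancel₀ hr.ne'] using hS.2 r⁻¹ (inv_nonneg.mpr hr.le) _ hrp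

theorem affineSpan_eq_top_of_isOrderUnit (hS : IsConvexCone S) {p : E} (hp : IsOrderUnit S p) :
    affineSpan ℝ S = ⊤ := by
  have hpS := hS.mem_of_isOrderUnit hp
  have h0 : (0 : E) ∈ S := by simpa using hS.2 0 le_rfl p hpS
  refine eq_top_iff.mpr fun z _ => ?_
  rw [← SetLike.mem_coe, ← insert_eq_of_mem h0, affineSpan_insert_zero]
  obtain ⟨r, hr, hz⟩ := hp z
  have hrp : r • p ∈ Submodule.span ℝ S := Submodule.subset_span (hS.2 r hr.le p hpS)
  simpa using Submodule.sub_mem _ hrp (Submodule.subset_span hz)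

theorem add_mem_interior [TopologicalSpace E] [SeparatelyContinuousAdd E] (hS : IsConvexCone S)
    {x y : E} (hx : x ∈ S) (hy : y ∈ interior S) : x + y ∈ interior S := by
  refine interior_maximal ?_ (isOpenMap_add_left x _ isOpen_interior) ⟨y, hy, rfl⟩
  rintro _ ⟨z, hz, rfl⟩
  exact hS.1 x hx z (interior_subset hz)

theorem smul_mem_interior [TopologicalSpace E] [ContinuousConstSMul ℝ E] (hS : IsConvexCone S)
    {r : ℝ} (hr : 0 < r) {x : E} (hx : x ∈ interior S) : r • x ∈ interior S := by
  refine interior_maximal ?_ (isOpenMap_smul₀ hr.ne' _ isOpen_interior) ⟨x, hx, rfl⟩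
  rintro _ ⟨z, hz, rfl⟩
  exact hS.2 r hr.le z (interior_subset hz)

theorem exists_smul_sub_mem_and_smul_add_mem [TopologicalSpace E] [ContinuousAdd E]
    [ContinuousSMul ℝ E] (hS : IsConvexCone S) {a : E} (ha : a ∈ interior S) (v : E) :
    ∃ r : ℝ, 0 < r ∧ r • a - v ∈ S ∧ r • a + v ∈ S := by
  have hline : ∀ᶠ t : ℝ in 𝓝 0, a + t • v ∈ S := by
    have hcont : Continuous fun t : ℝ => a + t • v := by fun_prop
    exact hcont.tendsto' 0 a (by simp) |>.eventually (mem_interior_iff_mem_nhds.mp ha)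
  have hsymm : ∀ᶠ t : ℝ in 𝓝 0, a + t • v ∈ S ∧ a + (-t) • v ∈ S :=
    hline.and ((continuous_neg.tendsto' 0 0 neg_zero).eventually hline)
  obtain ⟨ε, ⟨hplus, hminus⟩, hε⟩ :=
    ((hsymm.filter_mono nhdsWithin_le_nhds).and self_mem_nhdsWithin).exists (f := 𝓝[>] 0)
  have hε' : ε⁻¹ * ε = 1 := inv_mul_cancel₀ (ne_of_gt hε)
  refine ⟨ε⁻¹, inv_pos.mpr hε, ?_, ?_⟩
  · convert hS.2 ε⁻¹ (inv_nonneg.mpr hε.le) _ hminus using 1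
    rw [smul_add, smul_smul, mul_neg, hε', neg_smul, one_smul, sub_eq_add_neg]
  · convert hS.2 ε⁻¹ (inv_nonneg.mpr hε.le) _ hplus using 1
    rw [smul_add, smul_smul, hε', one_smul]

theorem mem_interior_of_isOrderUnit [TopologicalSpace E] [IsTopologicalAddGroup E]
    [ContinuousSMul ℝ E] [T2Space E] [FiniteDimensional ℝ E] (hS : IsConvexCone S) {p : E}
    (hp : IsOrderUnit S p) : p ∈ interior S := by
  obtain ⟨y, hy⟩ := hS.convex.interior_nonempty_of_affineSpan_eq_top
    (hS.affineSpan_eq_top_of_isOrderUnit hp)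
  obtain ⟨r, hr, hry⟩ := hp y
  have hrp : r • p ∈ interior S := by simpa using hS.add_mem_interior hry hy
  simpa [smul_smul, inv_mul_cancel₀ hr.ne'] using hS.smul_mem_interior (inv_pos.mpr hr) hrp

end IsConvexCone

section TensorProduct

variable {V W : Type*} [AddCommGroup V] [Module ℝ V] [AddCommGroup W] [Module ℝ W]
  {C : Set V} {D : Set W}

theorem tmul_mem_minTensor {c : V} {d : W} (hc : c ∈ C) (hd : d ∈ D) :
    c ⊗ₜ[ℝ] d ∈ minTensor C D :=
  AddSubmonoid.subset_closure ⟨c, hc, d, hd, rfl⟩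

theorem IsConvexCone.minTensor (hC : IsConvexCone C) (D : Set W) :
    IsConvexCone (minTensor C D) := by
  refine ⟨fun x hx y hy => AddSubmonoid.add_mem _ hx hy, fun r hr x hx => ?_⟩
  induction hx using AddSubmonoid.closure_induction with
  | mem y hy =>
    obtain ⟨c, hc, d, hd, rfl⟩ := hy
    rw [TensorProduct.smul_tmul']
    exact tmul_mem_minTensor (hC.2 r hr c hc) hd
  | zero => rw [smul_zero]; exact AddSubmonoid.zero_mem _
  | add y z _ _ hy hz => rw [smul_add]; exact AddSubmonoid.add_mem _ hy hz

theorem smul_tmul_sub_tmul_eq (r s : ℝ) (a v : V) (b w : W) :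
    (r * s) • (a ⊗ₜ[ℝ] b) - v ⊗ₜ[ℝ] w =
      (1 / 2 : ℝ) • ((r • a + v) ⊗ₜ[ℝ] (s • b - w) + (r • a - v) ⊗ₜ[ℝ] (s • b + w)) := by
  simp only [TensorProduct.add_tmul, TensorProduct.sub_tmul, TensorProduct.tmul_add,
    TensorProduct.tmul_sub, ← TensorProduct.smul_tmul', TensorProduct.tmul_smul]
  module

theorem isOrderUnit_tmul_minTensor [TopologicalSpace V] [ContinuousAdd V] [ContinuousSMul ℝ V]
    [TopologicalSpace W] [ContinuousAdd W] [ContinuousSMul ℝ W]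
    (hC : IsConvexCone C) (hD : IsConvexCone D) {a₁ : V} {a₂ : W}
    (h₁ : a₁ ∈ interior C) (h₂ : a₂ ∈ interior D) :
    IsOrderUnit (minTensor C D) (a₁ ⊗ₜ[ℝ] a₂) := by
  have hS := hC.minTensor D
  intro z
  induction z using TensorProduct.induction_on with
  | zero =>
    exact ⟨1, one_pos, by simpa using tmul_mem_minTensor (interior_subset h₁) (interior_subset h₂)⟩
  | tmul v w =>
    obtain ⟨r, hr, hv_sub, hv_add⟩ := hC.exists_smul_sub_mem_and_smul_add_mem h₁ v
    obtain ⟨s, hs, hw_sub, hw_add⟩ := hD.exists_smul_sub_mem_and_smul_add_mem h₂ w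
    refine ⟨r * s, mul_pos hr hs, ?_⟩
    rw [smul_tmul_sub_tmul_eq]
    exact hS.2 _ (by norm_num) _
      (hS.1 _ (tmul_mem_minTensor hv_add hw_sub) _ (tmul_mem_minTensor hv_sub hw_add))
  | add x y hx hy =>
    obtain ⟨r, hr, hrx⟩ := hx
    obtain ⟨s, hs, hsy⟩ := hy
    refine ⟨r + s, add_pos hr hs, ?_⟩
    convert hS.1 _ hrx _ hsy using 1
    module

end TensorProduct

theorem tmul_mem_interior_minTensor_general {V W : Type*}
    [AddCommGroup V] [Module ℝ V] [FiniteDimensional ℝ V]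
    [TopologicalSpace V] [IsTopologicalAddGroup V] [ContinuousSMul ℝ V]
    [AddCommGroup W] [Module ℝ W] [FiniteDimensional ℝ W]
    [TopologicalSpace W] [IsTopologicalAddGroup W] [ContinuousSMul ℝ W]
    [TopologicalSpace (TensorProduct ℝ V W)] [IsTopologicalAddGroup (TensorProduct ℝ V W)]
    [ContinuousSMul ℝ (TensorProduct ℝ V W)] [T2Space (TensorProduct ℝ V W)]
    (C : Set V) (D : Set W) (hC : IsConvexCone C) (hD : IsConvexCone D)
    {a₁ : V} {a₂ : W} (h₁ : a₁ ∈ interior C) (h₂ : a₂ ∈ interior D) :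
    a₁ ⊗ₜ[ℝ] a₂ ∈ interior (minTensor C D) :=
  (hC.minTensor D).mem_interior_of_isOrderUnit (isOrderUnit_tmul_minTensor hC hD h₁ h₂)

/-- if `a₁` is interior to the convex cone `C ⊆ V` and `a₂` is interior to the
convex cone `D ⊆ W`, then `a₁ ⊗ a₂` is interior to `C ⊗min D` in `V ⊗ W`.  (Each of the
finite-dimensional spaces carries its unique Hausdorff vector topology, encoded by the
instance assumptions.) -/
theorem tmul_mem_interior_minTensor {V W : Type*}
    [AddCommGroup V] [Module ℝ V] [FiniteDimensional ℝ V]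
    [TopologicalSpace V] [IsTopologicalAddGroup V] [ContinuousSMul ℝ V] [T2Space V]
    [AddCommGroup W] [Module ℝ W] [FiniteDimensional ℝ W]
    [TopologicalSpace W] [IsTopologicalAddGroup W] [ContinuousSMul ℝ W] [T2Space W]
    [TopologicalSpace (TensorProduct ℝ V W)] [IsTopologicalAddGroup (TensorProduct ℝ V W)]
    [ContinuousSMul ℝ (TensorProduct ℝ V W)] [T2Space (TensorProduct ℝ V W)]
    (C : Set V) (D : Set W) (hC : IsConvexCone C) (hD : IsConvexCone D)
    {a₁ : V} {a₂ : W} (h₁ : a₁ ∈ interior C) (h₂ : a₂ ∈ interior D) :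
    a₁ ⊗ₜ[ℝ] a₂ ∈ interior (minTensor C D) :=
  tmul_mem_interior_minTensor_general C D hC hD h₁ h₂
end
end

section
/- (Extension theorem for conic group systems) Let G be a group, let C ⊆ V and D ⊆ W be closed convex cones in finite-dimensional real vector spaces with D sharp, and let ρ: G → GL(V) and σ: G → GL(W) be group homomorphisms with ρ(g)(C) ⊆ C and σ(g)(D) ⊆ D for all g ∈ G. Let X ⊆ V be a linear subspace intersecting the interior of C, and let Ψ: X → W be a linear map with Ψ(C ∩ X) ⊆ D. For a homomorphism τ: G → GL(Z) preserving a convex cone E ⊆ Z, set A(τ,E) := { z ∈ Z : f(z) ≥ 0 for every f ∈ E^∨ with f ∘ τ(g) = f for all g ∈ G }. Let ρ⊗σ* be the representation of G on V ⊗ W' given by g ↦ ρ(g) ⊗ (σ(g⁻¹))', which preserves C ⊗min D^∨, and let σ⊗σ* be the representation on W ⊗ W' given by g ↦ σ(g) ⊗ (σ(g⁻¹))', which preserves D ⊗min D^∨. Then Ψ extends to a linear map Φ: V → W with Φ|_X = Ψ, Φ(C) ⊆ D, and Φ ∘ ρ(g) = σ(g) ∘ Φ for all g ∈ G, if and only if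 (Ψ ⊗ id_{W'}) maps A(ρ⊗σ*, C ⊗min D^∨) ∩ (X ⊗ W') into A(σ⊗σ*, D ⊗min D^∨). -/
open scoped TensorProduct

noncomputable section

/-- The dual cone `C^∨ ⊆ V'` of a set `C ⊆ V`. -/
def dualCone {V : Type*} [AddCommGroup V] [Module ℝ V] (C : Set V) :
    Set (Module.Dual ℝ V) := {φ | ∀ c ∈ C, 0 ≤ φ c}

/-- For a family of maps `T g : Z → Z` (a `G`-action) and a cone `E ⊆ Z`, the set
`A(T,E) = { z ∈ Z | f(z) ≥ 0 for every f ∈ E^∨ invariant under all T g }`. -/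
def invPosSet {G : Type*} {Z : Type*} [AddCommGroup Z] [Module ℝ Z]
    (T : G → (Z →ₗ[ℝ] Z)) (E : Set Z) : Set Z :=
  {z | ∀ f ∈ dualCone E, (∀ g : G, f ∘ₗ T g = f) → 0 ≤ f z}

/-!
A linear map `Φ : V → W` is recorded by the functional `v ⊗ φ ↦ φ (Φ v)` on `V ⊗ W'`. As `D` is
closed, `Φ` is positive iff this functional is nonnegative on `C ⊗min D^∨`, and `Φ` is
equivariant iff it is invariant under `ρ ⊗ σ*`. So an extension `Φ` of `Ψ` is the same as an
invariant functional, nonnegative on `C ⊗min D^∨`, extending `contractRight ∘ (Ψ ⊗ id)` from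
`X ⊗ W'`. These functionals are exactly those nonnegative on the cone generated by `C ⊗min D^∨`
and the vectors `(ρ ⊗ σ*)(g) u - u`, so the M. Riesz extension theorem produces one; its
hypothesis holds because `X` meets the interior of `C` and, `D` being closed and sharp, `D^∨`
spans `W'`.
-/

open TensorProduct Module

section DualCone

variable {V Y : Type*} [AddCommGroup V] [Module ℝ V] [AddCommGroup Y] [Module ℝ Y]

lemma dualCone_hull (s : Set V) : dualCone (PointedCone.hull ℝ s : Set V) = dualCone s :=
  Set.ext fun _ => SetLike.ext_iff.1 (PointedCone.dual_hull (p := Dual.eval ℝ V) s) _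

lemma mem_dualCone_minTensor_iff {C : Set V} {E : Set Y} {f : Dual ℝ (V ⊗[ℝ] Y)} :
    f ∈ dualCone (minTensor C E) ↔ ∀ c ∈ C, ∀ e ∈ E, 0 ≤ f (c ⊗ₜ e) := by
  refine ⟨fun hf c hc e he => hf _ (AddSubmonoid.subset_closure ⟨c, hc, e, he, rfl⟩),
    fun hf u hu => ?_⟩
  induction hu using AddSubmonoid.closure_induction with
  | mem x hx => obtain ⟨c, hc, e, he, rfl⟩ := hx; exact hf c hc e he
  | zero => simp
  | add x y _ _ hx hy => rw [map_add]; exact add_nonneg hx hy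

end DualCone

section ClosedCone

variable {W : Type*} [AddCommGroup W] [Module ℝ W] [FiniteDimensional ℝ W]
  [TopologicalSpace W] [IsTopologicalAddGroup W] [ContinuousSMul ℝ W] [T2Space W]

lemma locallyConvexSpace_of_finiteDimensional : LocallyConvexSpace ℝ W :=
  let e := (finBasis ℝ W).equivFun.toContinuousLinearEquiv
  Topology.IsInducing.locallyConvexSpace (f := (e : W →ₗ[ℝ] _))
    (by exact e.toHomeomorph.isInducing)

lemma IsConvexCone.mem_of_forall_dualCone_nonneg {D : Set W} (hD : IsConvexCone D)
    (hDcl : IsClosed D) (hne : D.Nonempty) {w : W} (hw : ∀ φ ∈ dualCone D, 0 ≤ φ w) :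
    w ∈ D := by
  have := locallyConvexSpace_of_finiteDimensional (W := W)
  let K : ProperCone ℝ W :=
    { toSubmodule := PointedCone.ofConeComb D hne fun x hx y hy a ha b hb =>
        hD.1 _ (hD.2 a ha x hx) _ (hD.2 b hb y hy)
      isClosed' := hDcl }
  by_contra hwD
  obtain ⟨f, hfK, hfw⟩ := K.hyperplane_separation_point hwD
  exact (hw f fun d hd => hfK d hd).not_gt hfw

lemma span_dualCone_eq_top {D : Set W} (hD : IsConvexCone D) (hDcl : IsClosed D)
    (hne : D.Nonempty) (hDsharp : ∀ x ∈ D, -x ∈ D → x = 0) :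
    Submodule.span ℝ (dualCone D) = ⊤ := by
  have hcoann : (Submodule.span ℝ (dualCone D)).dualCoannihilator = ⊥ := by
    refine (Submodule.eq_bot_iff _).2 fun w hw => hDsharp w ?_ ?_
    all_goals refine hD.mem_of_forall_dualCone_nonneg hDcl hne fun φ hφ => ?_
    all_goals have := (Submodule.mem_dualCoannihilator _).1 hw φ (Submodule.subset_span hφ)
    · exact this.ge
    · rw [map_neg, this, neg_zero]
  rw [← Subspace.dualCoannihilator_dualAnnihilator_eq (W := Submodule.span ℝ (dualCone D)),
    hcoann, Submodule.dualAnnihilator_bot]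

end ClosedCone

lemma exists_pos_add_smul_mem_of_mem_interior {V : Type*} [AddCommGroup V] [Module ℝ V]
    [TopologicalSpace V] [ContinuousAdd V] [ContinuousSMul ℝ V] {C : Set V} {x : V}
    (hx : x ∈ interior C) (v : V) : ∃ r : ℝ, 0 < r ∧ x + r • v ∈ C := by
  have hline : Filter.Tendsto (fun r : ℝ => x + r • v) (nhds 0) (nhds x) := by
    have : Continuous fun r : ℝ => x + r • v := by fun_prop
    simpa using this.tendsto 0
  have hev : ∀ᶠ r in nhdsWithin (0 : ℝ) (Set.Ioi 0), x + r • v ∈ C :=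
    nhdsWithin_le_nhds (hline.eventually (mem_interior_iff_mem_nhds.1 hx))
  obtain ⟨r, hrC, hr⟩ := (hev.and self_mem_nhdsWithin).exists
  exact ⟨r, hr, hrC⟩

section Tensor

variable {V Y : Type*} [AddCommGroup V] [Module ℝ V] [AddCommGroup Y] [Module ℝ Y]

lemma exists_tmul_add_mem_hull_minTensor {C : Set V} {E : Set Y} {x₀ : V}
    (hx₀ : ∀ v, ∃ r : ℝ, 0 < r ∧ x₀ + r • v ∈ C) (hE : Submodule.span ℝ E = ⊤) (u : V ⊗[ℝ] Y) :
    ∃ ψ : Y, x₀ ⊗ₜ ψ + u ∈ PointedCone.hull ℝ (minTensor C E) := by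
  set S := {u : V ⊗[ℝ] Y | ∃ ψ : Y, x₀ ⊗ₜ ψ + u ∈ PointedCone.hull ℝ (minTensor C E)}
  have hadd : ∀ u₁ ∈ S, ∀ u₂ ∈ S, u₁ + u₂ ∈ S := by
    rintro u₁ ⟨ψ₁, h₁⟩ u₂ ⟨ψ₂, h₂⟩
    refine ⟨ψ₁ + ψ₂, ?_⟩
    convert add_mem h₁ h₂ using 1
    rw [tmul_add]; abel
  have hgen : ∀ v, ∀ φ ∈ E, v ⊗ₜ φ ∈ S := by
    intro v φ hφ
    obtain ⟨r, hr, hrv⟩ := hx₀ v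
    refine ⟨r⁻¹ • φ, ?_⟩
    have hmem : (x₀ + r • v) ⊗ₜ[ℝ] φ ∈ PointedCone.hull ℝ (minTensor C E) :=
      PointedCone.subset_hull (AddSubmonoid.subset_closure ⟨_, hrv, φ, hφ, rfl⟩)
    convert PointedCone.smul_mem _ (inv_nonneg.2 hr.le) hmem using 1
    rw [add_tmul, smul_add, tmul_smul, ← smul_tmul' r v, smul_smul, inv_mul_cancel₀ hr.ne',
      one_smul]
  have htmul : ∀ v ψ, v ⊗ₜ[ℝ] ψ ∈ S := by
    intro v ψ
    induction (hE ▸ Submodule.mem_top : ψ ∈ Submodule.span ℝ E) using Submodule.span_induction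
      generalizing v with
    | mem φ hφ => exact hgen v φ hφ
    | zero => exact ⟨0, by simp⟩
    | add a b _ _ ha hb => rw [tmul_add]; exact hadd _ (ha v) _ (hb v)
    | smul a ψ _ hψ => rw [← smul_tmul]; exact hψ (a • v)
  induction u using TensorProduct.induction_on with
  | zero => exact ⟨0, by simp⟩
  | tmul v ψ => exact htmul v ψ
  | add u₁ u₂ h₁ h₂ => exact hadd _ h₁ _ h₂

end Tensor

section InvariantExtension

variable {G U U₀ : Type*} [AddCommGroup U] [Module ℝ U] [AddCommGroup U₀] [Module ℝ U₀]

def coinvariantHull (K : Set U) (T : G → U →ₗ[ℝ] U) : PointedCone ℝ U :=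
  PointedCone.hull ℝ (K ∪ Set.range fun p : G × U => T p.1 p.2 - p.2)

lemma mem_dualCone_coinvariantHull_iff {K : Set U} {T : G → U →ₗ[ℝ] U} {F : Dual ℝ U} :
    F ∈ dualCone (coinvariantHull K T : Set U) ↔ F ∈ dualCone K ∧ ∀ g, F ∘ₗ T g = F := by
  rw [coinvariantHull, dualCone_hull]
  refine ⟨fun hF => ⟨fun x hx => hF x (Or.inl hx), fun g => LinearMap.ext fun u => ?_⟩, ?_⟩
  · show F (T g u) = F u
    have h₁ := hF _ (Or.inr ⟨(g, u), rfl⟩)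
    have h₂ := hF _ (Or.inr ⟨(g, -u), rfl⟩)
    simp only [map_sub, map_neg, sub_nonneg] at h₁ h₂
    exact le_antisymm (by linarith) h₁
  · rintro ⟨hK, hT⟩ x (hx | ⟨⟨g, u⟩, rfl⟩)
    · exact hK x hx
    · simp [← LinearMap.comp_apply, hT g]

lemma coinvariantHull_subset_invPosSet (K : Set U) (T : G → U →ₗ[ℝ] U) :
    (coinvariantHull K T : Set U) ⊆ invPosSet T K := fun _ hz _ hFK hFT =>
  mem_dualCone_coinvariantHull_iff.2 ⟨hFK, hFT⟩ _ hz

/-- M. Riesz extension theorem applied to `coinvariantHull K T`. -/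
theorem exists_invariant_mem_dualCone_comp_eq (K : Set U) (T : G → U →ₗ[ℝ] U)
    (j : U₀ →ₗ[ℝ] U) (ℓ : Dual ℝ U₀) (hℓ : ∀ y, j y ∈ invPosSet T K → 0 ≤ ℓ y)
    (hK : ∀ u, ∃ y, j y + u ∈ PointedCone.hull ℝ K) :
    ∃ F : Dual ℝ U, F ∈ dualCone K ∧ (∀ g, F ∘ₗ T g = F) ∧ F ∘ₗ j = ℓ := by
  have hzero : ∀ y, j y = 0 → 0 ≤ ℓ y := fun y hy =>
    hℓ y fun _ _ _ => by rw [hy, map_zero]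
  have hker : LinearMap.ker j ≤ LinearMap.ker ℓ := fun y hy => by
    have h₁ := hzero y hy
    have h₂ := hzero (-y) (by rw [map_neg, hy, neg_zero])
    rw [map_neg, neg_nonneg] at h₂
    exact le_antisymm h₂ h₁
  let ℓ' : LinearMap.range j →ₗ[ℝ] ℝ :=
    (LinearMap.ker j).liftQ ℓ hker ∘ₗ j.quotKerEquivRange.symm.toLinearMap
  have hℓ' : ∀ y, ℓ' ⟨j y, LinearMap.mem_range_self j y⟩ = ℓ y := fun y => by
    simp [ℓ', LinearMap.quotKerEquivRange_symm_apply_image]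
  obtain ⟨F, hFℓ, hFpos⟩ := riesz_extension (coinvariantHull K T) ⟨LinearMap.range j, ℓ'⟩
    (by
      rintro ⟨_, y, rfl⟩ hy
      show 0 ≤ ℓ' _
      rw [hℓ']
      exact hℓ y (coinvariantHull_subset_invPosSet K T hy))
    (fun u => by
      obtain ⟨y, hy⟩ := hK u
      exact ⟨⟨j y, LinearMap.mem_range_self j y⟩,
        Submodule.span_mono Set.subset_union_left hy⟩)
  obtain ⟨hFK, hFT⟩ := mem_dualCone_coinvariantHull_iff.1 hFpos
  exact ⟨F, hFK, hFT, LinearMap.ext fun y => (hFℓ ⟨j y, _⟩).trans (hℓ' y)⟩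

end InvariantExtension

lemma minTensor_mapsTo_map {V V' Y Y' : Type*} [AddCommGroup V] [Module ℝ V]
    [AddCommGroup V'] [Module ℝ V'] [AddCommGroup Y] [Module ℝ Y] [AddCommGroup Y'] [Module ℝ Y']
    {C : Set V} {C' : Set V'} {E : Set Y} {E' : Set Y'} {f : V →ₗ[ℝ] V'} {g : Y →ₗ[ℝ] Y'}
    (hf : Set.MapsTo f C C') (hg : Set.MapsTo g E E') :
    Set.MapsTo (map f g) (minTensor C E) (minTensor C' E') := fun u hu => by
  induction hu using AddSubmonoid.closure_induction with
  | mem x hx =>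
    obtain ⟨c, hc, e, he, rfl⟩ := hx
    exact AddSubmonoid.subset_closure ⟨f c, hf hc, g e, hg he, map_tmul f g c e⟩
  | zero => rw [map_zero]; exact zero_mem (AddSubmonoid.closure _)
  | add x y _ _ hx hy => rw [map_add]; exact add_mem hx hy

lemma mapsTo_invPosSet {G U U' : Type*} [AddCommGroup U] [Module ℝ U] [AddCommGroup U']
    [Module ℝ U'] {T : G → U →ₗ[ℝ] U} {T' : G → U' →ₗ[ℝ] U'} {K : Set U} {K' : Set U'}
    (A : U →ₗ[ℝ] U') (hAK : Set.MapsTo A K K') (hAT : ∀ g, A ∘ₗ T g = T' g ∘ₗ A) :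
    Set.MapsTo A (invPosSet T K) (invPosSet T' K') := fun _ hz f hfK hfT =>
  hz (f ∘ₗ A) (fun _ hx => hfK _ (hAK hx)) fun g => by
    rw [LinearMap.comp_assoc, hAT, ← LinearMap.comp_assoc, hfT]

section DualTensor

variable {V W : Type*} [AddCommGroup V] [Module ℝ V] [AddCommGroup W] [Module ℝ W]

lemma exists_dual_apply_eq_tmul [FiniteDimensional ℝ W] (F : Dual ℝ (V ⊗[ℝ] Dual ℝ W)) :
    ∃ Φ : V →ₗ[ℝ] W, ∀ v φ, φ (Φ v) = F (v ⊗ₜ φ) :=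
  ⟨(evalEquiv ℝ W).symm.toLinearMap ∘ₗ curry F, fun v φ => by simp [apply_evalEquiv_symm_apply]⟩

lemma apply_apply_eq_of_comp_map_dualMap_eq {F : Dual ℝ (V ⊗[ℝ] Dual ℝ W)} {Φ : V →ₗ[ℝ] W}
    (hΦ : ∀ v φ, φ (Φ v) = F (v ⊗ₜ φ)) {A : V →ₗ[ℝ] V} {B : W →ₗ[ℝ] W}
    (hF : F ∘ₗ map A B.dualMap = F) (v : V) : B (Φ (A v)) = Φ v :=
  eval_apply_injective ℝ <| LinearMap.ext fun φ => by
    have := LinearMap.congr_fun hF (v ⊗ₜ φ)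
    rwa [LinearMap.comp_apply, map_tmul, ← hΦ, ← hΦ] at this

end DualTensor

lemma contractRight_nonneg_of_mem_invPosSet {G W : Type*} [Group G] [AddCommGroup W]
    [Module ℝ W] (σ : G →* (W ≃ₗ[ℝ] W)) {D : Set W} {z : W ⊗[ℝ] Dual ℝ W}
    (hz : z ∈ invPosSet (fun g => map (σ g : W →ₗ[ℝ] W) (σ g⁻¹ : W →ₗ[ℝ] W).dualMap)
      (minTensor D (dualCone D))) :
    0 ≤ contractRight ℝ W z :=
  hz _ (mem_dualCone_minTensor_iff.2 fun _ hd _ hφ => hφ _ hd) fun g =>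
    TensorProduct.ext' fun w φ => by simp

theorem extension_conic_group_systems_general {G V W : Type*} [Group G]
    [AddCommGroup V] [Module ℝ V]
    [TopologicalSpace V] [IsTopologicalAddGroup V] [ContinuousSMul ℝ V]
    [AddCommGroup W] [Module ℝ W] [FiniteDimensional ℝ W]
    [TopologicalSpace W] [IsTopologicalAddGroup W] [ContinuousSMul ℝ W] [T2Space W]
    (C : Set V) (D : Set W) (hDc : IsConvexCone D)
    (hDcl : IsClosed D)
    (hDsharp : ∀ x ∈ D, -x ∈ D → x = 0)
    (ρ : G →* (V ≃ₗ[ℝ] V)) (σ : G →* (W ≃ₗ[ℝ] W))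
    (X : Submodule ℝ V) (hX : ∃ x ∈ (X : Set V), x ∈ interior C)
    (Ψ : X →ₗ[ℝ] W) (hΨ : ∀ x : X, (x : V) ∈ C → Ψ x ∈ D) :
    (∃ Φ : V →ₗ[ℝ] W, (∀ x : X, Φ x = Ψ x) ∧ (∀ c ∈ C, Φ c ∈ D) ∧
        ∀ g : G, Φ ∘ₗ (ρ g : V →ₗ[ℝ] V) = (σ g : W →ₗ[ℝ] W) ∘ₗ Φ) ↔
      ∀ y : TensorProduct ℝ X (Module.Dual ℝ W),
        TensorProduct.map X.subtype LinearMap.id y ∈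
          invPosSet
            (fun g : G => TensorProduct.map (ρ g : V →ₗ[ℝ] V)
              ((σ g⁻¹ : W →ₗ[ℝ] W).dualMap))
            (minTensor C (dualCone D)) →
        TensorProduct.map Ψ LinearMap.id y ∈
          invPosSet
            (fun g : G => TensorProduct.map (σ g : W →ₗ[ℝ] W)
              ((σ g⁻¹ : W →ₗ[ℝ] W).dualMap))
            (minTensor D (dualCone D)) := by
  constructor
  · rintro ⟨Φ, hΦX, hΦC, hΦρ⟩ y hy
    have hΦΨ : Φ ∘ₗ X.subtype = Ψ := LinearMap.ext hΦX
    have hΦT := mapsTo_invPosSet (map Φ LinearMap.id)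
      (minTensor_mapsTo_map hΦC (Set.mapsTo_id _)) (fun g => by
        rw [← map_comp, ← map_comp, hΦρ, LinearMap.id_comp, LinearMap.comp_id]) hy
    rwa [← LinearMap.comp_apply, ← map_comp, LinearMap.id_comp, hΦΨ] at hΦT
  · intro hcond
    obtain ⟨x₀, hx₀X, hx₀C⟩ := hX
    have hDne : D.Nonempty := ⟨_, hΨ ⟨x₀, hx₀X⟩ (interior_subset hx₀C)⟩
    obtain ⟨F, hFpos, hFinv, hFΨ⟩ := exists_invariant_mem_dualCone_comp_eq _ _
      (map X.subtype LinearMap.id) (contractRight ℝ W ∘ₗ map Ψ LinearMap.id)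
      (fun y hy => contractRight_nonneg_of_mem_invPosSet σ (hcond y hy)) fun u => by
        obtain ⟨ψ, hψ⟩ := exists_tmul_add_mem_hull_minTensor
          (exists_pos_add_smul_mem_of_mem_interior hx₀C)
          (span_dualCone_eq_top hDc hDcl hDne hDsharp) u
        exact ⟨⟨x₀, hx₀X⟩ ⊗ₜ ψ, hψ⟩
    obtain ⟨Φ, hΦ⟩ := exists_dual_apply_eq_tmul F
    refine ⟨Φ, fun x => ?_, fun c hc => ?_, fun g => ?_⟩
    · refine eval_apply_injective ℝ (LinearMap.ext fun φ => ?_)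
      simpa using (hΦ x φ).trans (LinearMap.congr_fun hFΨ (x ⊗ₜ φ))
    · refine hDc.mem_of_forall_dualCone_nonneg hDcl hDne fun φ hφ => ?_
      rw [hΦ]
      exact mem_dualCone_minTensor_iff.1 hFpos c hc φ hφ
    · ext v
      simpa using congrArg (σ g) (apply_apply_eq_of_comp_map_dualMap_eq hΦ (hFinv g) v)

/-- extension theorem for conic group systems: with representations
`ρ : G → GL(V)`, `σ : G → GL(W)` preserving closed convex cones `C`, `D` (`D` sharp), a
subspace `X` meeting the interior of `C` and `Ψ : X → W` positive on `C ∩ X`, the map `Ψ`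
has a positive equivariant extension `Φ : V → W` iff `Ψ ⊗ id_{W'}` maps
`A(ρ⊗σ*, C ⊗min D^∨) ∩ (X ⊗ W')` into `A(σ⊗σ*, D ⊗min D^∨)`. -/
theorem extension_conic_group_systems {G V W : Type*} [Group G]
    [AddCommGroup V] [Module ℝ V] [FiniteDimensional ℝ V]
    [TopologicalSpace V] [IsTopologicalAddGroup V] [ContinuousSMul ℝ V] [T2Space V]
    [AddCommGroup W] [Module ℝ W] [FiniteDimensional ℝ W]
    [TopologicalSpace W] [IsTopologicalAddGroup W] [ContinuousSMul ℝ W] [T2Space W]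
    (C : Set V) (D : Set W) (hCc : IsConvexCone C) (hDc : IsConvexCone D)
    (hCcl : IsClosed C) (hDcl : IsClosed D)
    (hDsharp : ∀ x ∈ D, -x ∈ D → x = 0)
    (ρ : G →* (V ≃ₗ[ℝ] V)) (σ : G →* (W ≃ₗ[ℝ] W))
    (hρ : ∀ g : G, ∀ c ∈ C, ρ g c ∈ C) (hσ : ∀ g : G, ∀ d ∈ D, σ g d ∈ D)
    (X : Submodule ℝ V) (hX : ∃ x ∈ (X : Set V), x ∈ interior C)
    (Ψ : X →ₗ[ℝ] W) (hΨ : ∀ x : X, (x : V) ∈ C → Ψ x ∈ D) :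
    (∃ Φ : V →ₗ[ℝ] W, (∀ x : X, Φ x = Ψ x) ∧ (∀ c ∈ C, Φ c ∈ D) ∧
        ∀ g : G, Φ ∘ₗ (ρ g : V →ₗ[ℝ] V) = (σ g : W →ₗ[ℝ] W) ∘ₗ Φ) ↔
      ∀ y : TensorProduct ℝ X (Module.Dual ℝ W),
        TensorProduct.map X.subtype LinearMap.id y ∈
          invPosSet
            (fun g : G => TensorProduct.map (ρ g : V →ₗ[ℝ] V)
              ((σ g⁻¹ : W →ₗ[ℝ] W).dualMap))
            (minTensor C (dualCone D)) →
        TensorProduct.map Ψ LinearMap.id y ∈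
          invPosSet
            (fun g : G => TensorProduct.map (σ g : W →ₗ[ℝ] W)
              ((σ g⁻¹ : W →ₗ[ℝ] W).dualMap))
            (minTensor D (dualCone D)) :=
  extension_conic_group_systems_general C D hDc hDcl hDsharp ρ σ X hX Ψ hΨ
end
end

section
/- (Arveson's extension theorem, finite-dimensional version) Let X ⊆ Mat_d(ℂ) be a complex linear subspace containing the identity matrix I_d and closed under conjugate transpose (a concrete operator system). Let ψ: X → Mat_t(ℂ) be a ℂ-linear map that is completely positive, i.e., for every s ≥ 1 and every s×s block matrix A = (A_{kl}) with entries A_{kl} ∈ X that is positive semidefinite as an element of Mat_{ds}(ℂ), the block matrix (ψ(A_{kl}))_{k,l} ∈ Mat_{ts}(ℂ) is positive semidefinite. Then there exists a completely positive ℂ-linear map φ: Mat_d(ℂ) → Mat_t(ℂ) with φ|_X = ψ. -/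
/-!
Encode `ψ` by the functional `F B = ∑ᵢⱼ ψ(Bᵢⱼ)ᵢⱼ` on the operator system
`Mat_t(X) ⊆ Mat_t(Mat_d(ℂ))`; complete positivity of `ψ` at level `t` makes `F` positive.
A positive functional on an operator system is `*`-preserving, so `Re F` is nonnegative on the
cone of matrices with positive semidefinite real part, a cone which absorbs everything after
adding a multiple of the identity. M. Riesz's extension theorem extends `Re F` to a real
functional nonnegative on this cone, and its complexification `G` is a positive functional on
`Mat_t(Mat_d(ℂ))` extending `F` (Krein's theorem). Reading `G` back as `φ(x)ᵢⱼ = G(Eᵢⱼ ⊗ x)`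
extends `ψ`, and `φ` is completely positive because the quadratic form of `(φ(Aₖₗ))` at `v`
is `G(Wᴴ A W)` for a matrix `W` built from `v`.
-/

open Matrix
open scoped ComplexOrder

noncomputable section

/-- An `s × s` block matrix with `d × d` blocks is positive semidefinite (as an element of
`Mat_{ds}(ℂ)`). -/
def BlockPosSemidef {d s : ℕ} (A : Fin s → Fin s → Matrix (Fin d) (Fin d) ℂ) : Prop :=
  (Matrix.of fun (p q : Fin s × Fin d) => A p.1 q.1 p.2 q.2).PosSemidef

namespace Matrix

section PosSemidef

variable {n : Type*} [Fintype n] [DecidableEq n]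

/-- Over `ℂ`, nonnegativity of the quadratic form already forces `A` to be Hermitian. -/
theorem posSemidef_of_dotProduct_mulVec_nonneg {A : Matrix n n ℂ}
    (h : ∀ v, 0 ≤ star v ⬝ᵥ A *ᵥ v) : A.PosSemidef := by
  rw [← isPositive_toEuclideanLin_iff, LinearMap.isPositive_iff_complex]
  intro x
  rw [← inner_conj_symm, EuclideanSpace.inner_eq_star_dotProduct, ofLp_toLpLin, toLin'_apply,
    dotProduct_comm]
  obtain ⟨hre, him⟩ := Complex.nonneg_iff.mp (h x)
  generalize star x.ofLp ⬝ᵥ A *ᵥ x.ofLp = z at *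
  simp [Complex.ext_iff, ← him, hre]

open scoped Matrix.Norms.L2Operator MatrixOrder in
theorem IsHermitian.exists_smul_one_add_posSemidef {h : Matrix n n ℂ} (hh : h.IsHermitian) :
    ∃ c : ℝ, (c • (1 : Matrix n n ℂ) + h).PosSemidef := by
  refine ⟨‖h‖, ?_⟩
  have := IsSelfAdjoint.neg_algebraMap_norm_le_self (a := h) hh
  rwa [le_iff, sub_neg_eq_add, Algebra.algebraMap_eq_smul_one, add_comm] at this

end PosSemidef

section RealPartNonnegCone

variable (n : Type*)

def realPartNonnegCone : PointedCone ℝ (Matrix n n ℂ) where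
  carrier := {m | (m + mᴴ).PosSemidef}
  add_mem' {a b} ha hb := by
    change (a + b + (a + b)ᴴ).PosSemidef
    rw [conjTranspose_add, add_add_add_comm]
    exact ha.add hb
  zero_mem' := by
    change ((0 : Matrix n n ℂ) + 0ᴴ).PosSemidef
    rw [conjTranspose_zero, add_zero]
    exact PosSemidef.zero
  smul_mem' c m hm := by
    change ((c : ℝ) • m + ((c : ℝ) • m)ᴴ).PosSemidef
    rw [conjTranspose_smul, star_trivial, ← smul_add]
    exact hm.smul c.2

variable {n}

theorem mem_realPartNonnegCone {m : Matrix n n ℂ} :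
    m ∈ realPartNonnegCone n ↔ (m + mᴴ).PosSemidef := Iff.rfl

theorem PosSemidef.mem_realPartNonnegCone {P : Matrix n n ℂ} (hP : P.PosSemidef) :
    P ∈ realPartNonnegCone n := by
  rw [Matrix.mem_realPartNonnegCone, hP.1]
  exact hP.add hP

theorem mem_realPartNonnegCone_of_conjTranspose_eq_neg {m : Matrix n n ℂ} (hm : mᴴ = -m) :
    m ∈ realPartNonnegCone n := by
  rw [mem_realPartNonnegCone, hm, add_neg_cancel]
  exact PosSemidef.zero

theorem extendRCLike_apply_nonneg_of_posSemidef (g : Module.Dual ℝ (Matrix n n ℂ))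
    (hg : ∀ m ∈ realPartNonnegCone n, 0 ≤ g m) {P : Matrix n n ℂ} (hP : P.PosSemidef) :
    0 ≤ (g.extendRCLike : Module.Dual ℂ (Matrix n n ℂ)) P := by
  have hIP : (Complex.I • P)ᴴ = -(Complex.I • P) := by
    rw [conjTranspose_smul, hP.1, Complex.star_def, Complex.conj_I, neg_smul]
  have h₁ := hg _ (mem_realPartNonnegCone_of_conjTranspose_eq_neg hIP)
  have h₂ := hg _ (mem_realPartNonnegCone_of_conjTranspose_eq_neg (m := -(Complex.I • P))
    (by rw [conjTranspose_neg, hIP]))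
  rw [map_neg] at h₂
  rw [Complex.nonneg_iff, ← RCLike.re_to_complex, ← RCLike.im_to_complex,
    Module.Dual.re_extendRCLike_apply, Module.Dual.im_extendRCLike_apply, RCLike.I_to_complex]
  exact ⟨hg P hP.mem_realPartNonnegCone, by linarith⟩

end RealPartNonnegCone

section OperatorSystem

variable {n : Type*} [Fintype n] [DecidableEq n] {Y : Submodule ℂ (Matrix n n ℂ)}
  (F : Y →ₗ[ℂ] ℂ)

theorem im_map_eq_zero_of_isHermitian (hone : 1 ∈ Y)
    (hF : ∀ y : Y, (y : Matrix n n ℂ).PosSemidef → 0 ≤ F y) {y : Y}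
    (hy : (y : Matrix n n ℂ).IsHermitian) : (F y).im = 0 := by
  obtain ⟨c, hc⟩ := hy.exists_smul_one_add_posSemidef
  set one : Y := ⟨1, hone⟩
  have hcoe : ((c • one + y : Y) : Matrix n n ℂ) = c • 1 + y := by
    rw [Submodule.coe_add, Submodule.coe_smul_of_tower]
  have h₁ := (Complex.nonneg_iff.mp (hF (c • one + y) (hcoe ▸ hc))).2
  have h₂ := (Complex.nonneg_iff.mp (hF one PosSemidef.one)).2
  rw [map_add, LinearMap.map_smul_of_tower, Complex.add_im, Complex.real_smul, Complex.mul_im,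
    ← h₂] at h₁
  simpa using h₁.symm

theorem re_map_conjTranspose (hone : 1 ∈ Y) (hstar : ∀ y ∈ Y, yᴴ ∈ Y)
    (hF : ∀ y : Y, (y : Matrix n n ℂ).PosSemidef → 0 ≤ F y) (y : Y) :
    (F ⟨yᴴ, hstar _ y.2⟩).re = (F y).re := by
  set ys : Y := ⟨yᴴ, hstar _ y.2⟩
  have hk : ((Complex.I • (ys - y) : Y) : Matrix n n ℂ).IsHermitian := by
    simp only [IsHermitian, Submodule.coe_smul, Submodule.coe_sub, ys, conjTranspose_smul,
      conjTranspose_sub, conjTranspose_conjTranspose, Complex.star_def, Complex.conj_I]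
    rw [neg_smul, ← smul_neg, neg_sub]
  have hsub : ys = y - Complex.I • Complex.I • (ys - y) := by
    rw [smul_smul, Complex.I_mul_I, neg_one_smul, sub_neg_eq_add, add_sub_cancel]
  calc (F ys).re = (F y - Complex.I * F (Complex.I • (ys - y))).re := by
        rw [← smul_eq_mul, ← map_smul, ← map_sub, ← hsub]
    _ = (F y).re := by
        rw [Complex.sub_re, Complex.mul_re, Complex.I_re, Complex.I_im,
          im_map_eq_zero_of_isHermitian F hone hF hk]
        ring

theorem exists_extension_nonneg (hone : 1 ∈ Y) (hstar : ∀ y ∈ Y, yᴴ ∈ Y)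
    (hF : ∀ y : Y, (y : Matrix n n ℂ).PosSemidef → 0 ≤ F y) :
    ∃ G : Matrix n n ℂ →ₗ[ℂ] ℂ,
      (∀ y : Y, G y = F y) ∧ ∀ P : Matrix n n ℂ, P.PosSemidef → 0 ≤ G P := by
  have hre : ∀ y : Y, (y : Matrix n n ℂ) ∈ realPartNonnegCone n → 0 ≤ (F y).re := by
    intro y hy
    have hsum := hF (y + ⟨_, hstar _ y.2⟩) (mem_realPartNonnegCone.mp hy)
    rw [map_add, Complex.nonneg_iff, Complex.add_re, re_map_conjTranspose F hone hstar hF] at hsum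
    linarith [hsum.1]
  have hcofinal : ∀ m : Matrix n n ℂ,
      ∃ y : Y.restrictScalars ℝ, (y : Matrix n n ℂ) + m ∈ realPartNonnegCone n := by
    intro m
    obtain ⟨c, hc⟩ := (isHermitian_add_transpose_self m).exists_smul_one_add_posSemidef
    refine ⟨⟨(c / 2) • 1, Y.smul_of_tower_mem _ hone⟩, ?_⟩
    rw [mem_realPartNonnegCone]
    convert hc using 1
    rw [conjTranspose_add, conjTranspose_smul, conjTranspose_one, star_trivial]
    module
  obtain ⟨g, hgF, hg⟩ := riesz_extension (realPartNonnegCone n)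
    ⟨Y.restrictScalars ℝ, Complex.reLm ∘ₗ F.restrictScalars ℝ⟩ (fun y hy => hre y hy) hcofinal
  have hgF' : ∀ y : Y, g y = (F y).re := fun y => hgF y
  refine ⟨Module.Dual.extendRCLike g, fun y => ?_, fun P hP =>
    extendRCLike_apply_nonneg_of_posSemidef g hg hP⟩
  apply Complex.ext
  · rw [← RCLike.re_to_complex, Module.Dual.re_extendRCLike_apply, hgF']
  · have hIy := hgF' (Complex.I • y)
    rw [Submodule.coe_smul, F.map_smul, smul_eq_mul, Complex.I_mul_re] at hIy
    rw [← RCLike.im_to_complex, Module.Dual.im_extendRCLike_apply, RCLike.I_to_complex, hIy,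
      neg_neg]

end OperatorSystem

end Matrix

namespace Submodule

variable {m n : Type*} (X : Submodule ℂ (Matrix n n ℂ))

variable (m) in
def blockMatrix : Submodule ℂ (Matrix (m × n) (m × n) ℂ) :=
  X.matrix.comap (compLinearEquiv m m n n ℂ ℂ).symm.toLinearMap

variable {X}

theorem mem_blockMatrix {B : Matrix (m × n) (m × n) ℂ} :
    B ∈ X.blockMatrix m ↔ ∀ i j, (comp m m n n ℂ).symm B i j ∈ X := Iff.rfl

theorem one_mem_blockMatrix [DecidableEq m] [DecidableEq n] (hone : 1 ∈ X) :
    1 ∈ X.blockMatrix m := by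
  rw [mem_blockMatrix, (comp m m n n ℂ).symm_apply_eq.mpr comp_one.symm]
  intro i j
  rw [one_apply]
  split_ifs
  exacts [hone, X.zero_mem]

theorem conjTranspose_mem_blockMatrix (hstar : ∀ x ∈ X, xᴴ ∈ X) {B : Matrix (m × n) (m × n) ℂ}
    (hB : B ∈ X.blockMatrix m) : Bᴴ ∈ X.blockMatrix m :=
  fun i j => hstar _ (hB j i)

theorem comp_single_mem_blockMatrix [DecidableEq m] {x : Matrix n n ℂ} (hx : x ∈ X) (i j : m) :
    comp m m n n ℂ (single i j x) ∈ X.blockMatrix m := by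
  rw [mem_blockMatrix, Equiv.symm_apply_apply]
  intro k l
  rw [single_apply]
  split_ifs
  exacts [hx, X.zero_mem]

end Submodule

namespace Matrix

section BlockFunctional

variable {m n : Type*} [Fintype m] {X : Submodule ℂ (Matrix n n ℂ)}

def blockFunctional (ψ : X →ₗ[ℂ] Matrix m m ℂ) : X.blockMatrix m →ₗ[ℂ] ℂ :=
  ∑ i, ∑ j, entryLinearMap ℂ ℂ i j ∘ₗ ψ ∘ₗ
    ((entryLinearMap ℂ (Matrix n n ℂ) i j ∘ₗ
      (compLinearEquiv m m n n ℂ ℂ).symm.toLinearMap).restrict fun _ hB => hB i j)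

theorem blockFunctional_apply (ψ : X →ₗ[ℂ] Matrix m m ℂ) (B : X.blockMatrix m) :
    blockFunctional ψ B = ∑ i, ∑ j, ψ ⟨(comp m m n n ℂ).symm B i j, B.2 i j⟩ i j := by
  simp only [blockFunctional, LinearMap.coe_sum, Finset.sum_apply, LinearMap.comp_apply]
  rfl

/-- `blockFunctional ψ B` is the quadratic form of the block matrix `(ψ Bᵢⱼ)ᵢⱼ` at
`∑ᵢ eᵢ ⊗ eᵢ`. -/
theorem blockFunctional_nonneg [DecidableEq m] [Fintype n] (ψ : X →ₗ[ℂ] Matrix m m ℂ)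
    (hψ : ∀ A : Matrix m m X, (comp m m n n ℂ (A.map (↑))).PosSemidef →
      (comp m m m m ℂ (A.map ψ)).PosSemidef)
    {B : X.blockMatrix m} (hB : (B : Matrix (m × n) (m × n) ℂ).PosSemidef) :
    0 ≤ blockFunctional ψ B := by
  let A : Matrix m m X := of fun i j => ⟨(comp m m n n ℂ).symm B i j, B.2 i j⟩
  convert (hψ A hB).dotProduct_mulVec_nonneg fun p => if p.1 = p.2 then 1 else 0 using 1
  simp [blockFunctional_apply, dotProduct, mulVec, Fintype.sum_prod_type, A]

theorem blockFunctional_comp_single [DecidableEq m] (ψ : X →ₗ[ℂ] Matrix m m ℂ) (x : X)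
    (i j : m) :
    blockFunctional ψ ⟨_, Submodule.comp_single_mem_blockMatrix x.2 i j⟩ = ψ x i j := by
  have hterm : ∀ k l (hkl : (if i = k ∧ j = l then (x : Matrix n n ℂ) else 0) ∈ X),
      ψ ⟨_, hkl⟩ k l = if i = k ∧ j = l then ψ x k l else 0 := by
    intro k l hkl
    split_ifs
    exacts [rfl, congrFun₂ (map_zero ψ) k l]
  simp only [blockFunctional_apply, Equiv.symm_apply_apply, single_apply, hterm]
  simp [ite_and]

end BlockFunctional

section OfBlockFunctional

variable {m n : Type*} [DecidableEq m]

def ofBlockFunctional (G : Matrix (m × n) (m × n) ℂ →ₗ[ℂ] ℂ) :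
    Matrix n n ℂ →ₗ[ℂ] Matrix m m ℂ :=
  LinearMap.pi fun i => LinearMap.pi fun j =>
    G ∘ₗ (compLinearEquiv m m n n ℂ ℂ).toLinearMap ∘ₗ singleLinearMap ℂ i j

theorem ofBlockFunctional_apply (G : Matrix (m × n) (m × n) ℂ →ₗ[ℂ] ℂ) (x : Matrix n n ℂ)
    (i j : m) : ofBlockFunctional G x i j = G (comp m m n n ℂ (single i j x)) := rfl

theorem ofBlockFunctional_apply_of_extends [Fintype m] {X : Submodule ℂ (Matrix n n ℂ)}
    (ψ : X →ₗ[ℂ] Matrix m m ℂ) {G : Matrix (m × n) (m × n) ℂ →ₗ[ℂ] ℂ}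
    (hG : ∀ B : X.blockMatrix m, G B = blockFunctional ψ B) (x : X) :
    ofBlockFunctional G x = ψ x := by
  ext i j
  rw [ofBlockFunctional_apply, ← blockFunctional_comp_single ψ x i j, ← hG]

theorem conjTranspose_mul_comp_mul_eq_sum [Fintype m] [Fintype n] [DecidableEq n]
    {s : Type*} [Fintype s] (A : Matrix s s (Matrix n n ℂ)) (v : s × m → ℂ) :
    let W : Matrix (s × n) (m × n) ℂ := of fun p q => if p.2 = q.2 then v (p.1, q.1) else 0
    Wᴴ * comp s s n n ℂ A * W = ∑ k, ∑ i, ∑ l, ∑ j,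
      (star (v (k, i)) * v (l, j)) • comp m m n n ℂ (single i j (A k l)) := by
  intro W
  ext ⟨i', a⟩ ⟨j', b⟩
  simp only [Matrix.mul_apply, conjTranspose_apply, Matrix.of_apply, W, comp_apply,
    Fintype.sum_prod_type, Matrix.sum_apply, Matrix.smul_apply, single_apply, smul_eq_mul]
  simp only [apply_ite star, star_zero, Matrix.ite_apply, zero_apply, ite_mul, mul_ite,
    zero_mul, mul_zero, ite_and, Finset.sum_ite_irrel, Finset.sum_const_zero,
    Finset.sum_ite_eq', Finset.mem_univ, if_true, Finset.sum_mul]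
  rw [Finset.sum_comm]
  exact Finset.sum_congr rfl fun k _ => Finset.sum_congr rfl fun l _ => by ring

theorem posSemidef_comp_map_ofBlockFunctional [Fintype m] [Fintype n] [DecidableEq n]
    {G : Matrix (m × n) (m × n) ℂ →ₗ[ℂ] ℂ}
    (hG : ∀ P : Matrix (m × n) (m × n) ℂ, P.PosSemidef → 0 ≤ G P)
    {s : Type*} [Fintype s] [DecidableEq s] {A : Matrix s s (Matrix n n ℂ)}
    (hA : (comp s s n n ℂ A).PosSemidef) :
    (comp s s m m ℂ (A.map (ofBlockFunctional G))).PosSemidef := by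
  refine posSemidef_of_dotProduct_mulVec_nonneg fun v => ?_
  convert hG _ (hA.conjTranspose_mul_mul_same
    (of fun p q => if p.2 = q.2 then v (p.1, q.1) else 0 : Matrix (s × n) (m × n) ℂ)) using 1
  rw [conjTranspose_mul_comp_mul_eq_sum]
  simp only [map_sum, map_smul, smul_eq_mul, dotProduct, mulVec, Fintype.sum_prod_type,
    Finset.mul_sum, Pi.star_apply, comp_apply, map_apply, ofBlockFunctional_apply]
  refine Finset.sum_congr rfl fun _ _ => Finset.sum_congr rfl fun _ _ =>
    Finset.sum_congr rfl fun _ _ => Finset.sum_congr rfl fun _ _ => by ring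

end OfBlockFunctional

end Matrix

/-- Arveson's extension theorem, finite-dimensional version: a completely
positive map `ψ` on a concrete operator system `X ⊆ Mat_d(ℂ)` (a unital `*`-closed complex
subspace) into `Mat_t(ℂ)` extends to a completely positive map `φ : Mat_d(ℂ) → Mat_t(ℂ)`. -/
theorem arveson_extension {d t : ℕ}
    (X : Submodule ℂ (Matrix (Fin d) (Fin d) ℂ))
    (hone : (1 : Matrix (Fin d) (Fin d) ℂ) ∈ X)
    (hstar : ∀ x ∈ X, xᴴ ∈ X)
    (ψ : X →ₗ[ℂ] Matrix (Fin t) (Fin t) ℂ)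
    (hcp : ∀ (s : ℕ) (A : Fin s → Fin s → X),
      BlockPosSemidef (fun k l => (A k l : Matrix (Fin d) (Fin d) ℂ)) →
      BlockPosSemidef (fun k l => ψ (A k l))) :
    ∃ φ : Matrix (Fin d) (Fin d) ℂ →ₗ[ℂ] Matrix (Fin t) (Fin t) ℂ,
      (∀ (s : ℕ) (A : Fin s → Fin s → Matrix (Fin d) (Fin d) ℂ),
        BlockPosSemidef A → BlockPosSemidef (fun k l => φ (A k l))) ∧
      ∀ x : X, φ x = ψ x := by
  obtain ⟨G, hGψ, hG⟩ := exists_extension_nonneg (blockFunctional ψ)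
    (Submodule.one_mem_blockMatrix hone) (fun _ => Submodule.conjTranspose_mem_blockMatrix hstar)
    fun _ => blockFunctional_nonneg ψ (hcp t)
  exact ⟨ofBlockFunctional G, fun _ _ => posSemidef_comp_map_ofBlockFunctional hG,
    ofBlockFunctional_apply_of_extends ψ hGψ⟩
end
end

section
/- (Choi–Kraus representation) A ℂ-linear map Φ: Mat_d(ℂ) → Mat_t(ℂ) is completely positive, i.e., for every s ≥ 1 the map Φ ⊗ id_{Mat_s}: Mat_{ds}(ℂ) → Mat_{ts}(ℂ) maps positive semidefinite matrices to positive semidefinite matrices, if and only if there exist finitely many matrices V_1,…,V_r ∈ Mat_{d,t}(ℂ) such that Φ(A) = Σ_{i=1}^r V_i^* A V_i for every A ∈ Mat_d(ℂ). -/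
open Matrix
open scoped ComplexOrder

noncomputable section

/-- The map `Φ ⊗ id_{Mat_s}` on `Mat_{ds}(ℂ) = Mat_s(Mat_d(ℂ))`, acting blockwise: the
`(k,l)` block (a `d × d` matrix) is sent through `Φ`. -/
def blockApply {d t : ℕ} (Φ : Matrix (Fin d) (Fin d) ℂ →ₗ[ℂ] Matrix (Fin t) (Fin t) ℂ)
    (s : ℕ) (A : Matrix (Fin s × Fin d) (Fin s × Fin d) ℂ) :
    Matrix (Fin s × Fin t) (Fin s × Fin t) ℂ :=
  Matrix.of fun p q => Φ (Matrix.of fun a b => A (p.1, a) (q.1, b)) p.2 q.2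

/-- `Φ` is completely positive: for every `s ≥ 1`, `Φ ⊗ id_{Mat_s}` maps positive
semidefinite matrices to positive semidefinite matrices. -/
def IsCompletelyPositive {d t : ℕ}
    (Φ : Matrix (Fin d) (Fin d) ℂ →ₗ[ℂ] Matrix (Fin t) (Fin t) ℂ) : Prop :=
  ∀ (s : ℕ) (A : Matrix (Fin s × Fin d) (Fin s × Fin d) ℂ),
    A.PosSemidef → (blockApply Φ s A).PosSemidef

/-!
The Choi matrix `C = (Φ E_pq)_{p,q}` of `Φ` is the image under `Φ ⊗ id_d` of the positive
semidefinite matrix `ω ω^*`, where `ω = Σ_p e_p ⊗ e_p`; so complete positivity makes `C` positive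
semidefinite. Writing `C = Σ_k v_k v_k^*` and reading the conjugate of each `v_k` as a `d × t`
matrix `V_k` turns `Φ A = Σ_{p,q} A_pq Φ E_pq` into `Σ_k V_k^* A V_k`. Conversely, `Φ ⊗ id_s` of
a Kraus map is the Kraus map with operators `1_s ⊗ V_k`, and congruences preserve positive
semidefiniteness.
-/

open scoped Kronecker

section Choi

variable {R m n : Type*} [CommSemiring R] [Fintype m] [DecidableEq m]

def choiMatrix (Φ : Matrix m m R →ₗ[R] Matrix n n R) : Matrix (m × n) (m × n) R :=
  of fun p q => Φ (single p.1 q.1 1) p.2 q.2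

theorem map_apply_eq_sum_choiMatrix (Φ : Matrix m m R →ₗ[R] Matrix n n R)
    (A : Matrix m m R) (i j : n) :
    Φ A i j = ∑ p, ∑ q, A p q * choiMatrix Φ (p, i) (q, j) := by
  conv_lhs => rw [matrix_eq_sum_single A]
  have hsingle : ∀ p q, single p q (A p q) = A p q • single p q 1 := by simp
  simp only [hsingle, map_sum, map_smul, Matrix.sum_apply, Matrix.smul_apply, smul_eq_mul,
    choiMatrix, of_apply]

theorem map_eq_sum_of_choiMatrix_eq_sum_vecMulVec [StarRing R] {ι : Type*} [Fintype ι]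
    {Φ : Matrix m m R →ₗ[R] Matrix n n R} {v : ι → m × n → R}
    (hv : choiMatrix Φ = ∑ k, vecMulVec (v k) (star (v k))) (A : Matrix m m R) :
    Φ A = ∑ k, (of fun p i => star (v k (p, i)))ᴴ * A * of fun p i => star (v k (p, i)) := by
  ext i j
  simp only [map_apply_eq_sum_choiMatrix, hv, Matrix.sum_apply, vecMulVec_apply, mul_apply,
    conjTranspose_apply, of_apply, star_star, Pi.star_apply, Finset.mul_sum, Finset.sum_mul]
  simp_rw [Finset.sum_comm (s := (Finset.univ : Finset m)) (t := (Finset.univ : Finset ι))]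
  refine Finset.sum_congr rfl fun k _ => ?_
  rw [Finset.sum_comm]
  exact Finset.sum_congr rfl fun q _ => Finset.sum_congr rfl fun p _ => by ring

end Choi

theorem choiMatrix_eq_blockApply {d t : ℕ}
    (Φ : Matrix (Fin d) (Fin d) ℂ →ₗ[ℂ] Matrix (Fin t) (Fin t) ℂ) :
    choiMatrix Φ = blockApply Φ d
      (vecMulVec (fun p => (1 : Matrix (Fin d) (Fin d) ℂ) p.1 p.2)
        (star fun p => (1 : Matrix (Fin d) (Fin d) ℂ) p.1 p.2)) := by
  ext ⟨p, i⟩ ⟨q, j⟩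
  refine congrArg (fun M => Φ M i j) ?_
  ext a b
  simp only [single_apply, one_apply, vecMulVec_apply, Pi.star_apply, of_apply]
  split_ifs <;> simp_all

theorem blockApply_eq_sum_kronecker {d t r : ℕ}
    {Φ : Matrix (Fin d) (Fin d) ℂ →ₗ[ℂ] Matrix (Fin t) (Fin t) ℂ}
    {V : Fin r → Matrix (Fin d) (Fin t) ℂ} (hV : ∀ A, Φ A = ∑ k, (V k)ᴴ * A * V k)
    (s : ℕ) (A : Matrix (Fin s × Fin d) (Fin s × Fin d) ℂ) :
    blockApply Φ s A = ∑ k, (1 ⊗ₖ V k : Matrix (Fin s × Fin d) (Fin s × Fin t) ℂ)ᴴ * A *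
      (1 ⊗ₖ V k : Matrix (Fin s × Fin d) (Fin s × Fin t) ℂ) := by
  ext ⟨p, i⟩ ⟨q, j⟩
  simp only [blockApply, hV, Matrix.sum_apply, mul_apply, Fintype.sum_prod_type,
    kroneckerMap_apply, one_apply, conjTranspose_apply, of_apply]
  simp [apply_ite (starRingEnd ℂ), ite_mul, Finset.sum_ite_eq']

theorem IsCompletelyPositive.posSemidef_choiMatrix {d t : ℕ}
    {Φ : Matrix (Fin d) (Fin d) ℂ →ₗ[ℂ] Matrix (Fin t) (Fin t) ℂ} (hΦ : IsCompletelyPositive Φ) :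
    (choiMatrix Φ).PosSemidef :=
  choiMatrix_eq_blockApply Φ ▸ hΦ d _ (posSemidef_vecMulVec_self_star _)

theorem isCompletelyPositive_of_eq_sum_conjTranspose_mul_mul {d t r : ℕ}
    {Φ : Matrix (Fin d) (Fin d) ℂ →ₗ[ℂ] Matrix (Fin t) (Fin t) ℂ}
    {V : Fin r → Matrix (Fin d) (Fin t) ℂ} (hV : ∀ A, Φ A = ∑ k, (V k)ᴴ * A * V k) :
    IsCompletelyPositive Φ := fun s A hA => by
  rw [blockApply_eq_sum_kronecker hV]
  exact posSemidef_sum _ fun k _ => hA.conjTranspose_mul_mul_same _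

/-- Choi–Kraus representation: a ℂ-linear map `Φ : Mat_d(ℂ) → Mat_t(ℂ)` is
completely positive iff there are finitely many `V_i ∈ Mat_{d,t}(ℂ)` with
`Φ(A) = Σᵢ Vᵢ^* A Vᵢ` for all `A`. -/
theorem choi_kraus {d t : ℕ}
    (Φ : Matrix (Fin d) (Fin d) ℂ →ₗ[ℂ] Matrix (Fin t) (Fin t) ℂ) :
    IsCompletelyPositive Φ ↔
      ∃ (r : ℕ) (V : Fin r → Matrix (Fin d) (Fin t) ℂ),
        ∀ A : Matrix (Fin d) (Fin d) ℂ, Φ A = ∑ i, (V i)ᴴ * A * V i := by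
  refine ⟨fun hΦ => ?_, fun ⟨_, _, hV⟩ => isCompletelyPositive_of_eq_sum_conjTranspose_mul_mul hV⟩
  obtain ⟨r, v, hv⟩ := posSemidef_iff_eq_sum_vecMulVec.mp hΦ.posSemidef_choiMatrix
  exact ⟨r, _, map_eq_sum_of_choiMatrix_eq_sum_vecMulVec hv⟩
end
end

section
/- (Choi-type criterion for complete positivity into an operator system) Let C be an abstract operator system on a finite-dimensional real vector space X, let d ≥ 1, and let Ψ: Her_d → X be an ℝ-linear map. Let m ∈ Her_d ⊗ Her_d denote the element corresponding, under the identification Her_d ⊗ Her_d ≅ Her_{d²}, to the positive semidefinite matrix Σ_{i,j=1}^d E_{ij} ⊗ E_{ij} (the unnormalized maximally entangled state, where E_{ij} is the matrix unit and ⊗ is the Kronecker product). Then (Ψ ⊗ id_{Her_s})(Psd_{ds}) ⊆ C(s) holds for all s ≥ 1 if and only if (Ψ ⊗ id_{Her_d})(m) ∈ C(d). -/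
open Matrix
open scoped TensorProduct Kronecker ComplexOrder

noncomputable section

/-- `Her_k`: the real vector space of Hermitian complex matrices indexed by `k`. -/
abbrev HM (k : Type*) [Fintype k] [DecidableEq k] : Type _ := selfAdjoint (Matrix k k ℂ)

section Infrastructure

variable {I J : Type*} [Fintype I] [DecidableEq I] [Fintype J] [DecidableEq J]

/-- The compression map `B ↦ M^* B M : Her_I → Her_J` (ℝ-linear). -/
def compr (M : Matrix I J ℂ) : HM I →ₗ[ℝ] HM J where
  toFun B := ⟨Mᴴ * B.1 * M, Matrix.isHermitian_conjTranspose_mul_mul M B.2⟩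
  map_add' A B := Subtype.ext (by simp [Matrix.mul_add, Matrix.add_mul])
  map_smul' r A := Subtype.ext (by simp [Matrix.mul_smul, Matrix.smul_mul])

/-- The Kronecker product of Hermitian matrices. -/
def kronHerm (A : HM I) (B : HM J) : HM (I × J) :=
  ⟨A.1 ⊗ₖ B.1, by
    have hA : (A.1)ᴴ = A.1 := A.2
    have hB : (B.1)ᴴ = B.1 := B.2
    show star _ = _
    rw [Matrix.star_eq_conjTranspose]
    ext ⟨i1, i2⟩ ⟨j1, j2⟩
    simp only [Matrix.conjTranspose_apply, Matrix.kroneckerMap_apply, star_mul']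
    rw [← Matrix.conjTranspose_apply, ← Matrix.conjTranspose_apply, hA, hB, mul_comm]⟩

def kronBil : HM I →ₗ[ℝ] HM J →ₗ[ℝ] HM (I × J) :=
  LinearMap.mk₂ ℝ kronHerm
    (fun A A' B => Subtype.ext (by simp [kronHerm, Matrix.add_kronecker]))
    (fun r A B => Subtype.ext (by simp [kronHerm, Matrix.smul_kronecker]))
    (fun A B B' => Subtype.ext (by simp [kronHerm, Matrix.kronecker_add]))
    (fun r A B => Subtype.ext (by simp [kronHerm, Matrix.kronecker_smul]))

/-- The identification `Her_I ⊗ Her_J ≅ Her_{I×J}` (via the Kronecker product),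
as a linear map. -/
def kron : TensorProduct ℝ (HM I) (HM J) →ₗ[ℝ] HM (I × J) :=
  TensorProduct.lift kronBil

end Infrastructure

/-- A proper cone: a convex cone that is closed (equivalently, by the bipolar theorem in
finite dimensions, equal to its double dual cone), sharp, and full. -/
def IsProperCone {M : Type*} [AddCommGroup M] [Module ℝ M] (C : Set M) : Prop :=
  (∀ x ∈ C, ∀ y ∈ C, x + y ∈ C) ∧ (∀ r : ℝ, 0 ≤ r → ∀ x ∈ C, r • x ∈ C) ∧
  (∀ x, (∀ f : Module.Dual ℝ M, (∀ c ∈ C, 0 ≤ f c) → 0 ≤ f x) → x ∈ C) ∧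
  (∀ x ∈ C, -x ∈ C → x = 0) ∧ (∀ x : M, ∃ a ∈ C, ∃ b ∈ C, x = a - b)

/-- An abstract operator system on a real vector space `X`: a proper cone
`cone s ⊆ X ⊗ Her_s` for every level `s`, compatible with all matrix compressions. -/
structure AOS (X : Type*) [AddCommGroup X] [Module ℝ X] where
  cone : ∀ s : ℕ, Set (TensorProduct ℝ X (HM (Fin s)))
  proper : ∀ s, IsProperCone (cone s)
  compat : ∀ (s t : ℕ) (M : Matrix (Fin s) (Fin t) ℂ), ∀ A ∈ cone s,
    TensorProduct.map LinearMap.id (compr M) A ∈ cone t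

/-
A positive semidefinite `x ∈ Her_d ⊗ Her_s` is a sum of rank-one terms `v vᴴ`, and each of them
is the compression `(1 ⊗ M)ᴴ m (1 ⊗ M)` of the maximally entangled element `m = vec 1 (vec 1)ᴴ`,
where `M` is the `d × s` reshaping of `v`. As `Ψ ⊗ id` commutes with `id ⊗ (B ↦ Mᴴ B M)` and
each `C(s)` is closed under sums and compressions, `(Ψ ⊗ id)(m) ∈ C(d)` gives
`(Ψ ⊗ id)(x) ∈ C(s)`. Matrix identities are transported back to `Her_d ⊗ Her_s` by injectivity of
the Kronecker map, which holds because ℝ-independent Hermitian matrices are ℂ-independent.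
-/

theorem LinearIndependent.complex_of_selfAdjoint {A ι : Type*} [AddCommGroup A] [Module ℂ A]
    [StarAddMonoid A] [StarModule ℂ A] {v : ι → selfAdjoint A}
    (hv : LinearIndependent ℝ v) : LinearIndependent ℂ fun i => (v i : A) := by
  rw [linearIndependent_iff'] at hv ⊢
  intro s g hg i hi
  refine Complex.ext (hv s (fun i => (g i).re) ?_ i hi) (hv s (fun i => (g i).im) ?_ i hi)
  · simpa [realPart_smul] using congrArg realPart hg
  · simpa [imaginaryPart_smul] using congrArg imaginaryPart hg

theorem star_vec_one {n R : Type*} [DecidableEq n] [Semiring R] [StarRing R] :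
    star (vec (1 : Matrix n n R)) = vec 1 := by
  rw [star_vec, Matrix.map_one _ (star_zero R) (star_one R)]

theorem sum_single_kronecker_single_eq_vecMulVec {n R : Type*} [Fintype n] [DecidableEq n]
    [Semiring R] :
    ∑ i : n, ∑ j : n, single i j (1 : R) ⊗ₖ single i j (1 : R) = vecMulVec (vec 1) (vec 1) := by
  ext ⟨p, q⟩ ⟨r, t⟩
  by_cases hpq : p = q <;> by_cases hrt : r = t <;>
    simp [Matrix.sum_apply, single_apply, vecMulVec_apply, one_apply, ite_and, hpq, hrt, eq_comm]

section Kron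

variable {I J : Type*} [Fintype I] [DecidableEq I] [Fintype J] [DecidableEq J]

theorem kron_tmul (A : HM I) (B : HM J) : (kron (A ⊗ₜ[ℝ] B)).1 = A.1 ⊗ₖ B.1 := rfl

theorem kron_injective : Function.Injective (kron : HM I ⊗[ℝ] HM J →ₗ[ℝ] HM (I × J)) := by
  let b := Module.Free.chooseBasis ℝ (HM I)
  let c := Module.Free.chooseBasis ℝ (HM J)
  have hindep : LinearIndependent ℝ fun p : _ × _ => kron (b p.1 ⊗ₜ[ℝ] c p.2) := by
    refine LinearIndependent.of_comp (selfAdjoint.submodule ℝ _).subtype ?_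
    have := ((b.linearIndependent.complex_of_selfAdjoint.tmul_of_isDomain
      c.linearIndependent.complex_of_selfAdjoint).map' _
      (kroneckerLinearEquiv I I J J ℂ).ker).restrict_scalars' ℝ
    convert this using 1
    ext p : 1
    exact (kron_tmul _ _).trans (kroneckerLinearEquiv_tmul _ _).symm
  rw [← (b.tensorProduct c).constr_self ℝ kron]
  refine Module.Basis.injective_constr_of_linearIndependent _ ?_
  simpa only [Module.Basis.tensorProduct_apply'] using hindep

theorem compr_one : compr (1 : Matrix I I ℂ) = LinearMap.id :=
  LinearMap.ext fun A => Subtype.ext (by simp [compr])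

theorem kron_comp_map_compr {I' J' : Type*} [Fintype I'] [DecidableEq I'] [Fintype J']
    [DecidableEq J'] (N : Matrix I I' ℂ) (M : Matrix J J' ℂ) :
    kron ∘ₗ TensorProduct.map (compr N) (compr M) = compr (N ⊗ₖ M) ∘ₗ kron := by
  refine TensorProduct.ext' fun A B => Subtype.ext ?_
  simp only [LinearMap.comp_apply, TensorProduct.map_tmul]
  simp [compr, kron_tmul, conjTranspose_kronecker, mul_kronecker_mul]

-- `vec` stacks columns, so `vec Mᵀ (i, a) = M i a`.
theorem val_kron_map_compr_of_maxEntangled {n : Type*} [Fintype n] [DecidableEq n]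
    {m : HM n ⊗[ℝ] HM n} (hm : (kron m).1 = vecMulVec (vec 1) (vec 1)) (M : Matrix n J ℂ) :
    (kron (TensorProduct.map LinearMap.id (compr M) m)).1 = vecMulVec (star (vec Mᵀ)) (vec Mᵀ) := by
  rw [← compr_one, ← LinearMap.comp_apply kron, kron_comp_map_compr]
  change (1 ⊗ₖ M)ᴴ * (kron m).1 * (1 ⊗ₖ M) = _
  have hrow : vec (1 : Matrix n n ℂ) ᵥ* (1 ⊗ₖ M) = vec Mᵀ := by simp [vec_vecMul_kronecker]
  rw [hm, mul_vecMulVec, vecMulVec_mul, ← hrow, star_vecMul, star_vec_one]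

theorem exists_eq_sum_map_compr_of_posSemidef {n : Type*} [Fintype n] [DecidableEq n]
    {m : HM n ⊗[ℝ] HM n} (hm : (kron m).1 = vecMulVec (vec 1) (vec 1)) {x : HM n ⊗[ℝ] HM J}
    (hx : (kron x).1.PosSemidef) :
    ∃ (r : ℕ) (M : Fin r → Matrix n J ℂ),
      x = ∑ k, TensorProduct.map LinearMap.id (compr (M k)) m := by
  obtain ⟨r, v, hv⟩ := posSemidef_iff_eq_sum_vecMulVec.mp hx
  refine ⟨r, fun k => of (Function.curry (star (v k))), kron_injective (Subtype.ext ?_)⟩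
  rw [hv, map_sum, AddSubgroup.val_finsetSum]
  refine Finset.sum_congr rfl fun k _ => ?_
  rw [val_kron_map_compr_of_maxEntangled hm]
  exact (congrArg₂ vecMulVec (star_star (v k)) rfl).symm

end Kron

namespace AOS

variable {X : Type*} [AddCommGroup X] [Module ℝ X] (C : AOS X)

theorem zero_mem (s : ℕ) : 0 ∈ C.cone s := by
  obtain ⟨a, ha, -⟩ := (C.proper s).2.2.2.2 0
  simpa using (C.proper s).2.1 0 le_rfl a ha

theorem sum_mem {ι : Type*} {s : ℕ} (t : Finset ι) {f : ι → X ⊗[ℝ] HM (Fin s)}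
    (hf : ∀ i ∈ t, f i ∈ C.cone s) : ∑ i ∈ t, f i ∈ C.cone s :=
  Finset.sum_induction f (· ∈ C.cone s) (fun a b ha hb => (C.proper s).1 a ha b hb)
    (C.zero_mem s) hf

theorem rTensor_map_compr_mem {Y : Type*} [AddCommGroup Y] [Module ℝ Y] (Ψ : Y →ₗ[ℝ] X)
    {s t : ℕ} {y : Y ⊗[ℝ] HM (Fin s)} (hy : TensorProduct.map Ψ LinearMap.id y ∈ C.cone s)
    (M : Matrix (Fin s) (Fin t) ℂ) :
    TensorProduct.map Ψ LinearMap.id (TensorProduct.map LinearMap.id (compr M) y) ∈ C.cone t := by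
  have hcomm := (LinearMap.rTensor_comp_lTensor (f := Ψ) (g := compr M)).trans
    (LinearMap.lTensor_comp_rTensor (f := Ψ) (g := compr M)).symm
  exact (LinearMap.congr_fun hcomm y).symm ▸ C.compat s t M _ hy

end AOS

theorem choi_criterion_general {X : Type*} [AddCommGroup X] [Module ℝ X]
    (C : AOS X) (d : ℕ) (Ψ : HM (Fin d) →ₗ[ℝ] X)
    (m : TensorProduct ℝ (HM (Fin d)) (HM (Fin d)))
    (hm : (kron m).1 = ∑ i : Fin d, ∑ j : Fin d,
      single i j (1 : ℂ) ⊗ₖ single i j (1 : ℂ)) :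
    (∀ (s : ℕ) (x : TensorProduct ℝ (HM (Fin d)) (HM (Fin s))),
        (kron x).1.PosSemidef → TensorProduct.map Ψ LinearMap.id x ∈ C.cone s) ↔
      TensorProduct.map Ψ LinearMap.id m ∈ C.cone d := by
  rw [sum_single_kronecker_single_eq_vecMulVec] at hm
  refine ⟨fun h => h d m ?_, fun hmem s x hx => ?_⟩
  · rw [hm]
    nth_rw 1 [← star_vec_one]
    exact posSemidef_vecMulVec_star_self _
  · obtain ⟨r, M, rfl⟩ := exists_eq_sum_map_compr_of_posSemidef hm hx
    rw [map_sum]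
    exact C.sum_mem _ fun k _ => C.rTensor_map_compr_mem Ψ hmem (M k)

/-- Choi-type criterion: for an abstract operator system `C` on `X`, `d ≥ 1`,
and a linear map `Ψ : Her_d → X`, one has `(Ψ ⊗ id_{Her_s})(Psd_{ds}) ⊆ C(s)` for all `s`
iff `(Ψ ⊗ id_{Her_d})(m) ∈ C(d)`, where `m ∈ Her_d ⊗ Her_d` corresponds to the
(unnormalized) maximally entangled state `Σ_{i,j} E_{ij} ⊗ E_{ij}` under the Kronecker
identification `Her_d ⊗ Her_d ≅ Her_{d²}`. -/
theorem choi_criterion {X : Type*} [AddCommGroup X] [Module ℝ X] [FiniteDimensional ℝ X]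
    (C : AOS X) (d : ℕ) (hd : 1 ≤ d) (Ψ : HM (Fin d) →ₗ[ℝ] X)
    (m : TensorProduct ℝ (HM (Fin d)) (HM (Fin d)))
    (hm : (kron m).1 = ∑ i : Fin d, ∑ j : Fin d,
      single i j (1 : ℂ) ⊗ₖ single i j (1 : ℂ)) :
    (∀ (s : ℕ) (x : TensorProduct ℝ (HM (Fin d)) (HM (Fin s))),
        (kron x).1.PosSemidef → TensorProduct.map Ψ LinearMap.id x ∈ C.cone s) ↔
      TensorProduct.map Ψ LinearMap.id m ∈ C.cone d :=
  choi_criterion_general C d Ψ m hm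
end
end

section
/- (Dual operator system and biduality) Let C be an abstract operator system on a finite-dimensional real vector space X. For each s ≥ 1 define C^∨(s) ⊆ X' ⊗ Her_s as the set of all tensors Ψ ∈ X' ⊗ Her_s, regarded as linear maps X → Her_s, satisfying ⟨Ψ, A⟩ ≥ 0 for all A ∈ C(s), where the pairing between Lin(X, Her_s) and X ⊗ Her_s is ⟨Ψ, x ⊗ B⟩ := tr(Ψ(x)·B^T). Then C^∨ is an abstract operator system on the dual space X', and under the canonical identification X ≅ X'' one has (C^∨)^∨ = C. -/
open Matrix
open scoped TensorProduct Kronecker ComplexOrder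

noncomputable section

/-- The pairing between `Lin(Y, Her_s)` and `Y ⊗ Her_s` given by
`⟨Ψ, y ⊗ B⟩ = tr(Ψ(y)·Bᵀ)` (a real number). -/
def herPair {Y : Type*} [AddCommGroup Y] [Module ℝ Y] {s : ℕ}
    (Ψ : Y →ₗ[ℝ] HM (Fin s)) : TensorProduct ℝ Y (HM (Fin s)) →ₗ[ℝ] ℝ :=
  TensorProduct.lift <| LinearMap.mk₂ ℝ
    (fun y B => (Matrix.trace ((Ψ y).1 * (B.1)ᵀ)).re)
    (fun y y' B => by simp [Matrix.add_mul])
    (fun r y B => by simp [Matrix.smul_mul])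
    (fun y B B' => by simp [Matrix.mul_add])
    (fun r y B => by simp [Matrix.mul_smul])

/-- The dual system: the level-`s` cone consists of the tensors `Ψ ∈ Y' ⊗ Her_s`, regarded
as linear maps `Y → Her_s` via `Y' ⊗ Her_s ≅ Lin(Y, Her_s)`, pairing nonnegatively with
every element of the level-`s` cone. -/
def dualSysCone (Y : Type*) [AddCommGroup Y] [Module ℝ Y] [FiniteDimensional ℝ Y]
    (Cn : ∀ s : ℕ, Set (TensorProduct ℝ Y (HM (Fin s)))) (s : ℕ) :
    Set (TensorProduct ℝ (Module.Dual ℝ Y) (HM (Fin s))) :=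
  {Ψ | ∀ A ∈ Cn s, 0 ≤ herPair (dualTensorHomEquiv ℝ Y (HM (Fin s)) Ψ) A}

/-!
Identify `X' ⊗ Her_s` with `Lin(X, Her_s)`; then `herPair` becomes the pairing
`⟨f ⊗ B, y ⊗ B'⟩ = f y · Re tr(B B'ᵀ)`, the tensor product of the evaluation pairing and of the
trace form on `Her_s`. Both factors are perfect pairings, hence so is their tensor product, and
`C^∨(s)` is the ordinary dual cone of `C(s)` for it. For a perfect pairing the dual of a proper
cone is proper (it is automatically closed, sharp because `C(s)` is full, and full because `C(s)`
is sharp and closed) and a closed cone equals its bidual. Compatibility with compressions holds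
because `B ↦ Mᴴ B M` is adjoint to `B ↦ Mᵀᴴ B Mᵀ` for the trace form.
-/

open Module LinearMap

namespace PointedCone

lemma exists_sub_of_span_eq_top {R N : Type*} [Ring R] [LinearOrder R] [IsOrderedRing R]
    [AddCommGroup N] [Module R N] {C : PointedCone R N} (hC : Submodule.span R (C : Set N) = ⊤)
    (x : N) : ∃ a ∈ C, ∃ b ∈ C, x = a - b := by
  have hx : x ∈ Submodule.span R (C : Set N) := hC ▸ Submodule.mem_top
  induction hx using Submodule.span_induction with
  | mem a ha => exact ⟨a, ha, 0, C.zero_mem, (sub_zero a).symm⟩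
  | zero => exact ⟨0, C.zero_mem, 0, C.zero_mem, (sub_zero 0).symm⟩
  | add x y _ _ hx hy =>
    obtain ⟨a, ha, b, hb, rfl⟩ := hx
    obtain ⟨a', ha', b', hb', rfl⟩ := hy
    exact ⟨a + a', C.add_mem ha ha', b + b', C.add_mem hb hb', (add_sub_add_comm ..).symm⟩
  | smul r x _ hx =>
    obtain ⟨a, ha, b, hb, rfl⟩ := hx
    rcases le_total 0 r with hr | hr
    · exact ⟨r • a, C.smul_mem hr ha, r • b, C.smul_mem hr hb, smul_sub r a b⟩
    · refine ⟨(-r) • b, C.smul_mem (neg_nonneg.2 hr) hb,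
        (-r) • a, C.smul_mem (neg_nonneg.2 hr) ha, ?_⟩
      rw [neg_smul, neg_smul, neg_sub_neg, smul_sub]

variable {M N : Type*} [AddCommGroup M] [Module ℝ M] [AddCommGroup N] [Module ℝ N]
  (p : M →ₗ[ℝ] N →ₗ[ℝ] ℝ) [p.IsPerfPair] {K : Set M}

lemma dual_flip_dual_eq_of_closed
    (hK : ∀ x, (∀ f : Dual ℝ M, (∀ c ∈ K, 0 ≤ f c) → 0 ≤ f x) → x ∈ K) :
    (dual p.flip (dual p K) : Set M) = K := by
  refine subset_antisymm (fun x hx => hK x fun f hf => ?_) subset_dual_dual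
  obtain ⟨y, rfl⟩ := (IsPerfPair.bijective_right p).2 f
  exact hx fun c hc => hf c hc

lemma span_dual_eq_top
    (hclosed : ∀ x, (∀ f : Dual ℝ M, (∀ c ∈ K, 0 ≤ f c) → 0 ≤ f x) → x ∈ K)
    (hsharp : ∀ x ∈ K, -x ∈ K → x = 0) :
    Submodule.span ℝ (dual p K : Set N) = ⊤ := by
  rw [← Submodule.dualAnnihilator_eq_bot_iff, eq_bot_iff]
  intro f hf
  obtain ⟨x, rfl⟩ := (IsPerfPair.bijective_left p).2 f
  have hx : ∀ y ∈ dual p K, p x y = 0 := fun y hy =>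
    (Submodule.mem_dualAnnihilator _).1 hf y (Submodule.subset_span hy)
  have hbidual := dual_flip_dual_eq_of_closed p hclosed
  have hxK : x ∈ K := hbidual ▸ fun y hy => (hx y hy).ge
  have hnxK : -x ∈ K := hbidual ▸ fun y hy => by simp [hx y hy]
  simp [hsharp x hxK hnxK]

theorem isProperCone_dual (hK : IsProperCone K) : IsProperCone (dual p K : Set N) := by
  obtain ⟨-, -, hclosed, hsharp, hfull⟩ := hK
  refine ⟨fun x hx y hy => add_mem hx hy, fun r hr x hx => (dual p K).smul_mem hr hx,
    fun y hy c hc => hy (p c) fun z hz => hz hc, fun y hy hny => ?_,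
    exists_sub_of_span_eq_top (span_dual_eq_top p hclosed hsharp)⟩
  have hvanish : ∀ c ∈ K, p c y = 0 := fun c hc =>
    le_antisymm (by simpa using hny hc) (hy hc)
  refine (IsPerfPair.bijective_right p).1 (LinearMap.ext fun x => ?_)
  obtain ⟨a, ha, b, hb, rfl⟩ := hfull x
  simp [hvanish a ha, hvanish b hb]

end PointedCone

instance {k : Type*} [Fintype k] [DecidableEq k] : FiniteDimensional ℝ (HM k) :=
  Module.Finite.of_surjective (selfAdjointPart ℝ) fun A => ⟨A, A.2.selfAdjointPart_apply ℝ⟩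

section TraceForm

variable (k : Type*) [Fintype k] [DecidableEq k]

def hermTraceForm : HM k →ₗ[ℝ] HM k →ₗ[ℝ] ℝ :=
  LinearMap.mk₂ ℝ (fun A B => (trace (A.1 * (B.1)ᵀ)).re)
    (fun A A' B => by simp [Matrix.add_mul])
    (fun r A B => by simp)
    (fun A B B' => by simp [Matrix.mul_add])
    (fun r A B => by simp)

variable {k}

lemma hermTraceForm_apply (A B : HM k) :
    hermTraceForm k A B = (trace (A.1 * (B.1)ᵀ)).re := rfl

lemma hermTraceForm_comm (A B : HM k) : hermTraceForm k A B = hermTraceForm k B A := by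
  rw [hermTraceForm_apply, hermTraceForm_apply, ← trace_transpose (A.1 * (B.1)ᵀ),
    transpose_mul, transpose_transpose]

lemma flip_hermTraceForm : (hermTraceForm k).flip = hermTraceForm k :=
  LinearMap.ext₂ fun A B => hermTraceForm_comm B A

lemma hermTraceForm_injective : Function.Injective (hermTraceForm k) := by
  refine (injective_iff_map_eq_zero _).2 fun A hA => ?_
  have hherm : (A.1)ᴴ = A.1 := A.2
  -- pair `A` with `Aᵀ`: this gives `Re tr(Aᴴ A)`, and `tr(Aᴴ A)` is a nonnegative real
  have hre : (trace ((A.1)ᴴ * A.1)).re = 0 := by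
    simpa [hermTraceForm_apply, hherm] using
      congr($hA ⟨(A.1)ᵀ, IsHermitian.transpose A.2⟩)
  have hnonneg : 0 ≤ trace ((A.1)ᴴ * A.1) := (posSemidef_conjTranspose_mul_self _).trace_nonneg
  have htrace : trace ((A.1)ᴴ * A.1) = 0 :=
    Complex.ext hre (Complex.nonneg_iff.1 hnonneg).2.symm
  exact Subtype.ext (trace_conjTranspose_mul_self_eq_zero_iff.1 htrace)

instance : (hermTraceForm k).IsPerfPair :=
  .of_injective hermTraceForm_injective (flip_hermTraceForm (k := k) ▸ hermTraceForm_injective)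

lemma hermTraceForm_compr {I J : Type*} [Fintype I] [DecidableEq I] [Fintype J] [DecidableEq J]
    (M : Matrix I J ℂ) (B : HM I) (B' : HM J) :
    hermTraceForm J (compr M B) B' = hermTraceForm I B (compr Mᵀ B') := by
  rw [hermTraceForm_apply, hermTraceForm_apply]
  change (trace (Mᴴ * B.1 * M * (B'.1)ᵀ)).re = (trace (B.1 * ((Mᵀ)ᴴ * B'.1 * Mᵀ)ᵀ)).re
  have hM : ((Mᵀ)ᴴ)ᵀ = Mᴴ := by ext; simp
  rw [transpose_mul, transpose_mul, transpose_transpose, hM]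
  simp only [Matrix.mul_assoc]
  rw [trace_mul_comm Mᴴ]
  simp only [Matrix.mul_assoc]

end TraceForm

section TensorPairing

variable (Y : Type*) [AddCommGroup Y] [Module ℝ Y] [FiniteDimensional ℝ Y]
  (k : Type*) [Fintype k] [DecidableEq k]

def tensorPairing : Dual ℝ Y ⊗[ℝ] HM k →ₗ[ℝ] Y ⊗[ℝ] HM k →ₗ[ℝ] ℝ :=
  ((TensorProduct.congr (LinearEquiv.refl ℝ (Dual ℝ Y)) (hermTraceForm k).toPerfPair).trans
    (TensorProduct.dualDistribEquiv ℝ Y (HM k)) :)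

instance : LinearMap.IsPerfPair (R := ℝ) (M := Dual ℝ Y ⊗[ℝ] HM k) (N := Y ⊗[ℝ] HM k)
    (tensorPairing Y k) :=
  .of_bijective _ (LinearEquiv.bijective _)

variable {Y k}

@[simp]
lemma tensorPairing_tmul (f : Dual ℝ Y) (B : HM k) (y : Y) (B' : HM k) :
    tensorPairing Y k (f ⊗ₜ B) (y ⊗ₜ B') = f y * hermTraceForm k B B' := by
  simp [tensorPairing]

lemma herPair_dualTensorHomEquiv {s : ℕ} (Ψ : Dual ℝ Y ⊗[ℝ] HM (Fin s))
    (A : Y ⊗[ℝ] HM (Fin s)) :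
    herPair (dualTensorHomEquiv ℝ Y (HM (Fin s)) Ψ) A = tensorPairing Y (Fin s) Ψ A := by
  induction A using TensorProduct.induction_on with
  | zero => simp
  | tmul y B =>
    induction Ψ using TensorProduct.induction_on with
    | zero => simp [herPair]
    | tmul f B' => simp [herPair, hermTraceForm_apply]
    | add Ψ₁ Ψ₂ h₁ h₂ => simp_all [herPair, Matrix.add_mul]
  | add A₁ A₂ h₁ h₂ => simp_all

lemma dualSysCone_eq_dual (Cn : ∀ s : ℕ, Set (Y ⊗[ℝ] HM (Fin s))) (s : ℕ) :
    dualSysCone Y Cn s = PointedCone.dual (tensorPairing Y (Fin s)).flip (Cn s) := by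
  ext Ψ
  simp only [dualSysCone, Set.mem_ofPred_eq, SetLike.mem_coe, PointedCone.mem_dual,
    herPair_dualTensorHomEquiv, flip_apply]

lemma tensorPairing_map_compr {I J : Type*} [Fintype I] [DecidableEq I] [Fintype J]
    [DecidableEq J] (M : Matrix I J ℂ) (Ψ : Dual ℝ Y ⊗[ℝ] HM I) (A : Y ⊗[ℝ] HM J) :
    tensorPairing Y J (TensorProduct.map LinearMap.id (compr M) Ψ) A =
      tensorPairing Y I Ψ (TensorProduct.map LinearMap.id (compr Mᵀ) A) := by
  induction Ψ using TensorProduct.induction_on with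
  | zero => simp
  | tmul f B =>
    induction A using TensorProduct.induction_on with
    | zero => simp
    | tmul y B' => simp [hermTraceForm_compr]
    | add A₁ A₂ h₁ h₂ => simp_all
  | add Ψ₁ Ψ₂ h₁ h₂ => simp_all

lemma tensorPairing_map_eval (A : Y ⊗[ℝ] HM k) (Ψ : Dual ℝ Y ⊗[ℝ] HM k) :
    tensorPairing (Dual ℝ Y) k (TensorProduct.map (Dual.eval ℝ Y) LinearMap.id A) Ψ =
      tensorPairing Y k Ψ A := by
  induction A using TensorProduct.induction_on with
  | zero => simp
  | tmul y B =>
    induction Ψ using TensorProduct.induction_on with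
    | zero => simp
    | tmul f B' => simp [hermTraceForm_comm B]
    | add Ψ₁ Ψ₂ h₁ h₂ => simp_all
  | add A₁ A₂ h₁ h₂ => simp_all

end TensorPairing

lemma dualSysCone_dualSysCone_eq {Y : Type*} [AddCommGroup Y] [Module ℝ Y]
    [FiniteDimensional ℝ Y] (Cn : ∀ s : ℕ, Set (Y ⊗[ℝ] HM (Fin s))) (s : ℕ)
    (hclosed : ∀ A, (∀ f : Dual ℝ (Y ⊗[ℝ] HM (Fin s)), (∀ c ∈ Cn s, 0 ≤ f c) → 0 ≤ f A) →
      A ∈ Cn s) :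
    dualSysCone (Dual ℝ Y) (dualSysCone Y Cn) s =
      TensorProduct.map (Dual.eval ℝ Y) LinearMap.id '' Cn s := by
  let E := TensorProduct.congr (evalEquiv ℝ Y) (LinearEquiv.refl ℝ (HM (Fin s)))
  have hE : TensorProduct.map (Dual.eval ℝ Y) LinearMap.id = E.toLinearMap :=
    TensorProduct.ext' fun _ _ => rfl
  rw [hE, LinearEquiv.coe_coe, E.image_eq_preimage_symm,
    ← PointedCone.dual_flip_dual_eq_of_closed (N := Dual ℝ Y ⊗[ℝ] HM (Fin s))
      (tensorPairing Y (Fin s)).flip hclosed]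
  ext Φ
  simp only [dualSysCone_eq_dual, Set.mem_preimage, SetLike.mem_coe, PointedCone.mem_dual,
    flip_apply]
  refine forall₂_congr fun Ψ _ => ?_
  rw [← tensorPairing_map_eval (E.symm Φ), hE, LinearEquiv.coe_coe, E.apply_symm_apply]

/-- dual operator system and biduality: the level-wise dual `C^∨` of an
abstract operator system `C` on `X` is an abstract operator system on `X'` (a proper cone at
each level, compatible with compressions), and under the canonical identification `X ≅ X''`
one has `(C^∨)^∨ = C`. -/
theorem dual_operator_system_biduality {X : Type*} [AddCommGroup X] [Module ℝ X]
    [FiniteDimensional ℝ X] (C : AOS X) :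
    (∀ s : ℕ, IsProperCone (dualSysCone X C.cone s)) ∧
    (∀ (s t : ℕ) (M : Matrix (Fin s) (Fin t) ℂ), ∀ Ψ ∈ dualSysCone X C.cone s,
      TensorProduct.map LinearMap.id (compr M) Ψ ∈ dualSysCone X C.cone t) ∧
    (∀ s : ℕ, dualSysCone (Module.Dual ℝ X) (dualSysCone X C.cone) s =
      TensorProduct.map (Module.Dual.eval ℝ X) LinearMap.id '' C.cone s) := by
  refine ⟨fun s => ?_, fun s t M Ψ hΨ => ?_,
    fun s => dualSysCone_dualSysCone_eq C.cone s (C.proper s).2.2.1⟩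
  · rw [dualSysCone_eq_dual]
    exact PointedCone.isProperCone_dual _ (C.proper s)
  · rw [dualSysCone_eq_dual] at hΨ ⊢
    intro A hA
    rw [flip_apply, tensorPairing_map_compr]
    exact hΨ (C.compat t s Mᵀ A hA)
end
end
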